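/- arXiv:1706.03524 — 5 statements merged into one kernel-verified Lean document; each statement's English description precedes it below -/
import Mathlib

section
/- Stretched exponential moment equivalence for the tail density: Let γ ∈ [0,1), α > 0 and μ ∈ (0, 1−γ). Then there exist constants η₁, η₂ > 0, depending only on μ and α, such that for every non-negative summable sequence (c_i)_{i≥1} with tail density (G_j)_{j≥1}, one has η₁ ∑_{j≥1} ψ_j G_j ≤ ∑_{i≥1} exp(α i^μ) c_i ≤ η₂ ∑_{j≥1} ψ_j G_j, where ψ_j := j^{μ−1} exp(α j^μ) for j ≥ 1 (the inequalities being understood in [0,∞]). -/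
/-!
STATEMENT 3: Stretched exponential moment equivalence for the tail density.

Let `γ ∈ [0,1)`, `α > 0`, `μ ∈ (0, 1-γ)`. There are `η₁, η₂ > 0` depending
only on `μ` and `α` such that for every non-negative summable sequence
`(c_i)_{i ≥ 1}` with tail density `G_j = ∑_{i ≥ j} c_i`,
`η₁ ∑_{j ≥ 1} ψ_j G_j ≤ ∑_{i ≥ 1} exp(α i^μ) c_i ≤ η₂ ∑_{j ≥ 1} ψ_j G_j`,
where `ψ_j = j^{μ-1} exp(α j^μ)`, the inequalities understood in `[0,∞]`.

Sequences are indexed by `ℕ` with the relevant entries `c (i+1)`, `i : ℕ`,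
corresponding to `c_i`, `i ≥ 1`.
-/

set_option maxHeartbeats 800000

namespace TDaux

open Real Finset

lemma aux_lower {μ : ℝ} (hμ0 : 0 < μ) (hμ1 : μ < 1) {t : ℝ} (ht : 1 ≤ t) :
    μ * t ^ (μ - 1) ≤ t ^ μ - (t - 1) ^ μ := by
  have ht0 : (0:ℝ) < t := lt_of_lt_of_le one_pos ht
  have hinv : 1 / t ≤ 1 := by
    rw [div_le_one ht0]; exact ht
  have hs : (-1:ℝ) ≤ -(1/t) := by linarith
  have hb := rpow_one_add_le_one_add_mul_self (s := -(1/t)) hs hμ0.le hμ1.le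
  have hfac : t - 1 = t * (1 + -(1/t)) := by field_simp; ring
  have hnn : (0:ℝ) ≤ 1 + -(1/t) := by linarith
  have h1 : (t - 1) ^ μ ≤ t ^ μ - μ * t ^ (μ - 1) := by
    calc (t-1)^μ = (t * (1 + -(1/t)))^μ := by rw [← hfac]
      _ = t^μ * (1 + -(1/t))^μ := Real.mul_rpow ht0.le hnn
      _ ≤ t^μ * (1 + μ * -(1/t)) := by
          apply mul_le_mul_of_nonneg_left hb (Real.rpow_nonneg ht0.le μ)
      _ = t^μ - μ * (t^μ / t) := by ring
      _ = t^μ - μ * t^(μ-1) := by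
          rw [Real.rpow_sub ht0, Real.rpow_one]
  linarith

lemma aux_upper {μ : ℝ} (hμ0 : 0 < μ) (hμ1 : μ < 1) {u : ℝ} (hu : 1 ≤ u) :
    (u + 1) ^ μ ≤ u ^ μ + μ * u ^ (μ - 1) := by
  have hu0 : (0:ℝ) < u := lt_of_lt_of_le one_pos hu
  have hs : (-1:ℝ) ≤ 1/u := by have : (0:ℝ) ≤ 1/u := by positivity
                               linarith
  have hb := rpow_one_add_le_one_add_mul_self (s := 1/u) hs hμ0.le hμ1.le
  have hfac : u + 1 = u * (1 + 1/u) := by field_simp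
  calc (u+1)^μ = (u * (1 + 1/u))^μ := by rw [← hfac]
    _ = u^μ * (1 + 1/u)^μ := Real.mul_rpow hu0.le (by positivity)
    _ ≤ u^μ * (1 + μ * (1/u)) := mul_le_mul_of_nonneg_left hb (Real.rpow_nonneg hu0.le μ)
    _ = u^μ + μ * (u^μ / u) := by ring
    _ = u^μ + μ * u^(μ-1) := by rw [Real.rpow_sub hu0, Real.rpow_one]

lemma aux_d_le_one {μ : ℝ} (hμ0 : 0 < μ) (hμ1 : μ < 1) {t : ℝ} (ht : 1 ≤ t) :
    t ^ μ - (t - 1) ^ μ ≤ 1 := by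
  rcases le_or_gt 2 t with h2 | h2
  · have hu : (1:ℝ) ≤ t - 1 := by linarith
    have h := aux_upper hμ0 hμ1 hu
    have heq : t - 1 + 1 = t := by ring
    rw [heq] at h
    have hle1 : (t-1)^(μ-1) ≤ 1 := Real.rpow_le_one_of_one_le_of_nonpos hu (by linarith)
    nlinarith [hμ0.le]
  · have h1 : t ^ μ ≤ t := by
      calc t ^ μ ≤ t ^ (1:ℝ) := Real.rpow_le_rpow_of_exponent_le ht hμ1.le
        _ = t := Real.rpow_one t
    have h2' : t - 1 ≤ (t - 1) ^ μ := by
      rcases eq_or_lt_of_le (sub_nonneg.mpr ht) with h0 | h0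
      · rw [← h0]; positivity
      · calc t - 1 = (t-1) ^ (1:ℝ) := (Real.rpow_one _).symm
          _ ≤ (t-1)^μ := Real.rpow_le_rpow_of_exponent_ge h0 (by linarith) hμ1.le
    linarith


lemma step_low {α μ : ℝ} (hα : 0 < α) (hμ0 : 0 < μ) (hμ1 : μ < 1) {t : ℝ} (ht : 1 ≤ t) :
    (α * μ / Real.exp α) * (t ^ (μ - 1) * Real.exp (α * t ^ μ)) ≤
      Real.exp (α * t ^ μ) - Real.exp (α * (t - 1) ^ μ) := by
  have ht0 : (0:ℝ) < t := lt_of_lt_of_le one_pos ht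
  set A := α * t ^ μ with hA
  set B := α * (t - 1) ^ μ with hB
  have hd1 : μ * t ^ (μ - 1) ≤ t ^ μ - (t - 1) ^ μ := aux_lower hμ0 hμ1 ht
  have hd2 : t ^ μ - (t - 1) ^ μ ≤ 1 := aux_d_le_one hμ0 hμ1 ht
  have hAB1 : α * (μ * t ^ (μ-1)) ≤ A - B := by
    rw [hA, hB]; nlinarith
  have hAB2 : A - B ≤ α := by rw [hA, hB]; nlinarith
  have h1 : Real.exp B * (A - B) ≤ Real.exp A - Real.exp B := by
    have hEB : (0:ℝ) < Real.exp B := Real.exp_pos B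
    have hexp : Real.exp A = Real.exp B * Real.exp (A - B) := by
      rw [← Real.exp_add]; ring_nf
    nlinarith [mul_le_mul_of_nonneg_left (Real.add_one_le_exp (A - B)) hEB.le]
  have h2 : Real.exp A / Real.exp α ≤ Real.exp B := by
    rw [div_le_iff₀ (Real.exp_pos α), ← Real.exp_add]
    exact Real.exp_le_exp.mpr (by linarith)
  have hnn : (0:ℝ) ≤ A - B := by
    have : 0 ≤ α * (μ * t ^ (μ-1)) := by positivity
    linarith
  calc (α * μ / Real.exp α) * (t ^ (μ - 1) * Real.exp A)
      = (Real.exp A / Real.exp α) * (α * (μ * t ^ (μ-1))) := by ring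
    _ ≤ Real.exp B * (A - B) := by
        apply mul_le_mul h2 hAB1 (by positivity) (Real.exp_pos B).le
    _ ≤ Real.exp A - Real.exp B := h1

lemma step_up {α μ : ℝ} (hα : 0 < α) (hμ0 : 0 < μ) (hμ1 : μ < 1) {t : ℝ} (ht : 2 ≤ t) :
    Real.exp (α * t ^ μ) - Real.exp (α * (t - 1) ^ μ) ≤
      (2 * (α * μ)) * (t ^ (μ - 1) * Real.exp (α * t ^ μ)) := by
  have ht0 : (0:ℝ) < t := by linarith
  have hu : (1:ℝ) ≤ t - 1 := by linarith
  set A := α * t ^ μ with hA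
  set B := α * (t - 1) ^ μ with hB
  have hBA : B ≤ A := by
    rw [hA, hB]
    apply mul_le_mul_of_nonneg_left _ hα.le
    exact Real.rpow_le_rpow (by linarith) (by linarith) hμ0.le
  have h1 : Real.exp A - Real.exp B ≤ Real.exp A * (A - B) := by
    have hEA : (0:ℝ) < Real.exp A := Real.exp_pos A
    have hexp : Real.exp B = Real.exp A * Real.exp (B - A) := by
      rw [← Real.exp_add]; ring_nf
    nlinarith [mul_le_mul_of_nonneg_left (Real.add_one_le_exp (B - A)) hEA.le]
  -- bound A - B
  have hd : t ^ μ - (t - 1) ^ μ ≤ μ * (t-1) ^ (μ - 1) := by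
    have h := aux_upper hμ0 hμ1 hu
    have heq : t - 1 + 1 = t := by ring
    rw [heq] at h; linarith
  have hpow : (t-1) ^ (μ - 1) ≤ 2 * t ^ (μ - 1) := by
    have h2' : (t-1) ^ (μ-1) ≤ (t/2) ^ (μ-1) :=
      Real.rpow_le_rpow_of_nonpos (by linarith) (by linarith) (by linarith)
    have hdiv : (t/2:ℝ) ^ (μ-1) = t ^ (μ-1) / 2 ^ (μ-1) :=
      Real.div_rpow ht0.le (by norm_num : (0:ℝ) ≤ 2) (μ-1)
    have h2pow : (1/2:ℝ) ≤ 2 ^ (μ-1) := by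
      have h := Real.rpow_le_rpow_of_exponent_le (by norm_num : (1:ℝ) ≤ 2)
        (by linarith : (-1:ℝ) ≤ μ - 1)
      rw [Real.rpow_neg_one] at h
      calc (1/2:ℝ) = 2⁻¹ := by norm_num
        _ ≤ 2 ^ (μ-1) := h
    have htp : (0:ℝ) ≤ t ^ (μ-1) := Real.rpow_nonneg ht0.le _
    rw [hdiv] at h2'
    have : t ^ (μ-1) / 2 ^ (μ-1) ≤ t ^ (μ-1) / (1/2) :=
      div_le_div_of_nonneg_left htp (by norm_num) h2pow
    calc (t-1)^(μ-1) ≤ t ^ (μ-1) / 2 ^ (μ-1) := h2'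
      _ ≤ t ^ (μ-1) / (1/2) := this
      _ = 2 * t ^ (μ-1) := by ring
  have hAB : A - B ≤ 2 * (α * μ) * t ^ (μ-1) := by
    have hμp : (0:ℝ) ≤ μ := hμ0.le
    have : t ^ μ - (t-1)^μ ≤ 2 * μ * t ^ (μ-1) := by nlinarith
    rw [hA, hB]; nlinarith
  calc Real.exp A - Real.exp B ≤ Real.exp A * (A - B) := h1
    _ ≤ Real.exp A * (2 * (α * μ) * t ^ (μ-1)) :=
        mul_le_mul_of_nonneg_left hAB (Real.exp_pos A).le
    _ = (2 * (α * μ)) * (t ^ (μ-1) * Real.exp A) := by ring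


lemma sum_le {α μ : ℝ} (hα : 0 < α) (hμ0 : 0 < μ) (hμ1 : μ < 1) (n : ℕ) :
    ∑ j ∈ Finset.range (n+1), ((j:ℝ)+1)^(μ-1) * Real.exp (α*((j:ℝ)+1)^μ)
      ≤ (Real.exp α / (α*μ)) * Real.exp (α*((n:ℝ)+1)^μ) := by
  have hC : (0:ℝ) < Real.exp α / (α*μ) := by positivity
  have key : ∀ t : ℝ, 1 ≤ t → t^(μ-1) * Real.exp (α*t^μ) ≤
      (Real.exp α/(α*μ)) * (Real.exp (α*t^μ) - Real.exp (α*(t-1)^μ)) := by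
    intro t ht
    have h := mul_le_mul_of_nonneg_left (step_low hα hμ0 hμ1 ht) hC.le
    calc t^(μ-1)*Real.exp (α*t^μ)
        = (Real.exp α/(α*μ)) * ((α*μ/Real.exp α) * (t^(μ-1)*Real.exp (α*t^μ))) := by
          rw [← mul_assoc]
          have : (Real.exp α/(α*μ)) * (α*μ/Real.exp α) = 1 := by
            field_simp
          rw [this, one_mul]
      _ ≤ _ := h
  have main : ∀ m : ℕ, ∑ j ∈ Finset.range (m+1), ((j:ℝ)+1)^(μ-1) * Real.exp (α*((j:ℝ)+1)^μ)
      ≤ (Real.exp α/(α*μ)) * (Real.exp (α*((m:ℝ)+1)^μ) - 1) := by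
    intro m
    induction m with
    | zero =>
      have h := key 1 le_rfl
      simp only [Real.one_rpow, one_mul] at h
      rw [show (1:ℝ) - 1 = 0 by ring, Real.zero_rpow hμ0.ne', mul_zero, Real.exp_zero] at h
      simpa using h
    | succ n ih =>
      rw [Finset.sum_range_succ]
      have hcast : ((n+1:ℕ):ℝ) + 1 = (n:ℝ)+2 := by push_cast; ring
      rw [hcast]
      have h := key ((n:ℝ)+2) (by have : (0:ℝ) ≤ (n:ℝ) := Nat.cast_nonneg n; linarith)
      rw [show (n:ℝ)+2-1 = (n:ℝ)+1 by ring] at h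
      calc _ ≤ (Real.exp α/(α*μ)) * (Real.exp (α*((n:ℝ)+1)^μ) - 1)
              + (Real.exp α/(α*μ)) * (Real.exp (α*((n:ℝ)+2)^μ) - Real.exp (α*((n:ℝ)+1)^μ)) :=
            add_le_add ih h
        _ = (Real.exp α/(α*μ)) * (Real.exp (α*((n:ℝ)+2)^μ) - 1) := by ring
  have h := main n
  have h2 : (Real.exp α/(α*μ)) * (Real.exp (α*((n:ℝ)+1)^μ) - 1)
      ≤ (Real.exp α/(α*μ)) * Real.exp (α*((n:ℝ)+1)^μ) := by
    apply mul_le_mul_of_nonneg_left (by linarith) hC.le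
  linarith

lemma le_sum {α μ : ℝ} (hα : 0 < α) (hμ0 : 0 < μ) (hμ1 : μ < 1) (n : ℕ) :
    Real.exp (α*((n:ℝ)+1)^μ) ≤ (max 1 (2*(α*μ)) + 1) *
      ∑ j ∈ Finset.range (n+1), ((j:ℝ)+1)^(μ-1) * Real.exp (α*((j:ℝ)+1)^μ) := by
  set K := max 1 (2*(α*μ)) with hK
  have hK1 : (1:ℝ) ≤ K := le_max_left _ _
  have hK2 : 2*(α*μ) ≤ K := le_max_right _ _
  have main : ∀ m : ℕ, Real.exp (α*((m:ℝ)+1)^μ) - 1 ≤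
      K * ∑ j ∈ Finset.range (m+1), ((j:ℝ)+1)^(μ-1) * Real.exp (α*((j:ℝ)+1)^μ) := by
    intro m
    induction m with
    | zero =>
      simp only [Finset.sum_range_one, Nat.cast_zero, zero_add, Real.one_rpow, one_mul]
      nlinarith [Real.exp_pos (α * (1:ℝ)), hK1]
    | succ n ih =>
      rw [Finset.sum_range_succ]
      have hcast : ((n+1:ℕ):ℝ) + 1 = (n:ℝ)+2 := by push_cast; ring
      rw [hcast]
      have h := step_up hα hμ0 hμ1 (t := (n:ℝ)+2)
        (by have : (0:ℝ) ≤ (n:ℝ) := Nat.cast_nonneg n; linarith)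
      rw [show (n:ℝ)+2-1 = (n:ℝ)+1 by ring] at h
      have hψ : (0:ℝ) ≤ ((n:ℝ)+2)^(μ-1) * Real.exp (α*((n:ℝ)+2)^μ) := by positivity
      have h2 : Real.exp (α*((n:ℝ)+2)^μ) - Real.exp (α*((n:ℝ)+1)^μ)
          ≤ K * (((n:ℝ)+2)^(μ-1) * Real.exp (α*((n:ℝ)+2)^μ)) := by nlinarith
      have := add_le_add ih h2
      calc Real.exp (α*((n:ℝ)+2)^μ) - 1
          = (Real.exp (α*((n:ℝ)+1)^μ) - 1)
            + (Real.exp (α*((n:ℝ)+2)^μ) - Real.exp (α*((n:ℝ)+1)^μ)) := by ring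
        _ ≤ _ := by rw [mul_add]; exact this
  have hnn : ∀ j ∈ Finset.range (n+1), (0:ℝ) ≤ ((j:ℝ)+1)^(μ-1) * Real.exp (α*((j:ℝ)+1)^μ) := by
    intro j _; positivity
  have hfirst : (1:ℝ) ≤ (((0:ℕ):ℝ)+1)^(μ-1) * Real.exp (α*(((0:ℕ):ℝ)+1)^μ) := by
    simp only [Nat.cast_zero, zero_add, Real.one_rpow, one_mul]
    exact Real.one_le_exp (by positivity)
  have hS1 : (1:ℝ) ≤ ∑ j ∈ Finset.range (n+1), ((j:ℝ)+1)^(μ-1) * Real.exp (α*((j:ℝ)+1)^μ) :=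
    hfirst.trans (Finset.single_le_sum hnn (by simp))
  have h := main n
  nlinarith [h, hS1, hK1]


lemma fubini (Ψ a : ℕ → ENNReal) :
    (∑' j : ℕ, Ψ j * ∑' i : ℕ, a (j+i))
      = ∑' k : ℕ, (∑ j ∈ Finset.range (k+1), Ψ j) * a k := by
  classical
  have h1 : ∀ j : ℕ, Ψ j * ∑' i : ℕ, a (j+i)
      = ∑' k : ℕ, (if j ≤ k then Ψ j * a k else 0) := by
    intro j
    rw [← ENNReal.tsum_mul_left]
    have hinj : Function.Injective (fun i : ℕ => j + i) := fun x y h => by simpa using h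
    have hsupp : Function.support (fun k => if j ≤ k then Ψ j * a k else 0)
        ⊆ Set.range (fun i : ℕ => j + i) := by
      intro k hk
      by_cases h : j ≤ k
      · exact ⟨k - j, by simp; omega⟩
      · simp [h] at hk
    have h2 := hinj.tsum_eq (f := fun k => if j ≤ k then Ψ j * a k else 0) hsupp
    rw [← h2]
    refine tsum_congr fun i => ?_
    simp [Nat.le_add_right]
  calc (∑' j : ℕ, Ψ j * ∑' i : ℕ, a (j+i))
      = ∑' j : ℕ, ∑' k : ℕ, (if j ≤ k then Ψ j * a k else 0) := tsum_congr h1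
    _ = ∑' k : ℕ, ∑' j : ℕ, (if j ≤ k then Ψ j * a k else 0) := ENNReal.tsum_comm
    _ = ∑' k : ℕ, (∑ j ∈ Finset.range (k+1), Ψ j) * a k := by
        refine tsum_congr fun k => ?_
        rw [tsum_eq_sum (s := Finset.range (k+1)) (fun j hj => by
          rw [Finset.mem_range] at hj
          rw [if_neg (by omega)])]
        rw [Finset.sum_mul]
        refine Finset.sum_congr rfl fun j hj => ?_
        rw [Finset.mem_range] at hj
        rw [if_pos (by omega)]


end TDaux

theorem tail_density_stretched_exponential_equivalence
    (γ α μ : ℝ) (hγ0 : 0 ≤ γ) (hγ1 : γ < 1)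
    (hα : 0 < α) (hμ0 : 0 < μ) (hμ : μ < 1 - γ) :
    ∃ η₁ η₂ : ℝ, 0 < η₁ ∧ 0 < η₂ ∧
      ∀ c : ℕ → ℝ, (∀ i : ℕ, 0 ≤ c (i + 1)) →
        (Summable fun i : ℕ => c (i + 1)) →
        ENNReal.ofReal η₁ *
            (∑' j : ℕ, ENNReal.ofReal
              (((j : ℝ) + 1) ^ (μ - 1) * Real.exp (α * ((j : ℝ) + 1) ^ μ) *
                ∑' i : ℕ, c (j + 1 + i)))
          ≤ (∑' i : ℕ,
              ENNReal.ofReal (Real.exp (α * ((i : ℝ) + 1) ^ μ) * c (i + 1)))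
        ∧ (∑' i : ℕ,
              ENNReal.ofReal (Real.exp (α * ((i : ℝ) + 1) ^ μ) * c (i + 1)))
          ≤ ENNReal.ofReal η₂ *
            (∑' j : ℕ, ENNReal.ofReal
              (((j : ℝ) + 1) ^ (μ - 1) * Real.exp (α * ((j : ℝ) + 1) ^ μ) *
                ∑' i : ℕ, c (j + 1 + i))) := by
  have hμ1 : μ < 1 := by linarith
  have hη₂ : (0:ℝ) < max 1 (2*(α*μ)) + 1 := by
    have : (1:ℝ) ≤ max 1 (2*(α*μ)) := le_max_left _ _
    linarith
  refine ⟨α*μ/Real.exp α, max 1 (2*(α*μ)) + 1, by positivity, hη₂, ?_⟩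
  intro c hc hsum
  -- rewrite the ψ-weighted sum
  have hGsum : ∀ j : ℕ, Summable (fun i => c (j+1+i)) := by
    intro j
    have h := (summable_nat_add_iff (f := fun i => c (i+1)) j).mpr hsum
    refine h.congr fun i => ?_
    show c (i + j + 1) = c (j + 1 + i)
    congr 1
    omega
  have hfub := TDaux.fubini
    (fun j => ENNReal.ofReal (((j:ℝ)+1)^(μ-1) * Real.exp (α*((j:ℝ)+1)^μ)))
    (fun k => ENNReal.ofReal (c (k+1)))
  beta_reduce at hfub
  have hL : (∑' j : ℕ, ENNReal.ofReal
        (((j : ℝ) + 1) ^ (μ - 1) * Real.exp (α * ((j : ℝ) + 1) ^ μ) *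
          ∑' i : ℕ, c (j + 1 + i)))
      = ∑' k : ℕ, (∑ j ∈ Finset.range (k+1),
          ENNReal.ofReal (((j:ℝ)+1)^(μ-1) * Real.exp (α*((j:ℝ)+1)^μ)))
          * ENNReal.ofReal (c (k+1)) := by
    refine Eq.trans (tsum_congr fun j => ?_) hfub
    show ENNReal.ofReal _ = ENNReal.ofReal _ * ∑' i, ENNReal.ofReal (c (j + i + 1))
    rw [ENNReal.ofReal_mul (by positivity),
      ENNReal.ofReal_tsum_of_nonneg (fun i => by
        rw [show j+1+i = (j+i)+1 from by omega]; exact hc (j+i)) (hGsum j)]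
    congr 1
    refine tsum_congr fun i => ?_
    congr 2
    omega
  have hM : (∑' i : ℕ, ENNReal.ofReal (Real.exp (α * ((i:ℝ)+1)^μ) * c (i+1)))
      = ∑' k : ℕ, ENNReal.ofReal (Real.exp (α*((k:ℝ)+1)^μ)) * ENNReal.ofReal (c (k+1)) :=
    tsum_congr fun k => ENNReal.ofReal_mul (by positivity)
  have hS : ∀ k : ℕ, (∑ j ∈ Finset.range (k+1),
        ENNReal.ofReal (((j:ℝ)+1)^(μ-1) * Real.exp (α*((j:ℝ)+1)^μ)))
      = ENNReal.ofReal (∑ j ∈ Finset.range (k+1),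
          ((j:ℝ)+1)^(μ-1) * Real.exp (α*((j:ℝ)+1)^μ)) := by
    intro k
    rw [ENNReal.ofReal_sum_of_nonneg (fun j _ => by positivity)]
  constructor
  · rw [hL, hM, ← ENNReal.tsum_mul_left]
    refine ENNReal.tsum_le_tsum fun k => ?_
    rw [hS k, ← mul_assoc, ← ENNReal.ofReal_mul (by positivity)]
    refine mul_le_mul_left (ENNReal.ofReal_le_ofReal ?_) _
    have h := TDaux.sum_le hα hμ0 hμ1 k
    have hq : (0:ℝ) < α*μ/Real.exp α := by positivity
    have h2 := mul_le_mul_of_nonneg_left h hq.le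
    calc α*μ/Real.exp α * ∑ j ∈ Finset.range (k+1),
          ((j:ℝ)+1)^(μ-1) * Real.exp (α*((j:ℝ)+1)^μ)
        ≤ α*μ/Real.exp α * ((Real.exp α/(α*μ)) * Real.exp (α*((k:ℝ)+1)^μ)) := h2
      _ = Real.exp (α*((k:ℝ)+1)^μ) := by
          rw [← mul_assoc]
          have : α*μ/Real.exp α * (Real.exp α/(α*μ)) = 1 := by field_simp
          rw [this, one_mul]
  · rw [hL, hM, ← ENNReal.tsum_mul_left]
    refine ENNReal.tsum_le_tsum fun k => ?_
    rw [hS k, ← mul_assoc, ← ENNReal.ofReal_mul hη₂.le]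
    refine mul_le_mul_left (ENNReal.ofReal_le_ofReal ?_) _
    exact TDaux.le_sum hα hμ0 hμ1 k
end

section
/- Evolution equation for the tail density: Let (c_i(t))_{i≥1} be a solution to the Becker-Döring equations with non-negative initial datum of finite density, and assume the coefficient hypotheses (H1) and (H2). Then for each j ≥ 2 the tail density G_j(t) = ∑_{i≥j} c_i(t) is a continuously differentiable function of t and satisfies (d/dt) G_j(t) = a_{j−1} c_1(t) (G_{j−1}(t) − G_j(t)) + b_j (G_{j+1}(t) − G_j(t)) for all t ≥ 0. -/
/-!
Sequences are indexed by `ℕ`; the physically relevant entries are those of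
index `i ≥ 1` (index `0` is unused).
-/

open Filter Set
open scoped Topology

/-- Hypothesis (H1): either `0 < a_i ≤ ā i^γ` for all `i ≥ 1`, some `ā > 0`
and some `0 ≤ γ < 1`, or `C₁ i ≤ a_i ≤ C₂ i` for all `i ≥ 1` and some
`0 < C₁ ≤ C₂`. -/
def BDH1 (a : ℕ → ℝ) (γ : ℝ) : Prop :=
  (0 ≤ γ ∧ γ < 1 ∧ ∃ abar : ℝ, 0 < abar ∧
      ∀ i : ℕ, 1 ≤ i → a i ≤ abar * (i : ℝ) ^ γ) ∨
  (γ = 1 ∧ ∃ C₁ C₂ : ℝ, 0 < C₁ ∧ C₁ ≤ C₂ ∧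
      ∀ i : ℕ, 1 ≤ i → C₁ * (i : ℝ) ≤ a i ∧ a i ≤ C₂ * (i : ℝ))

/-- A solution of the Becker–Döring equations on `[0,∞)` with coagulation
coefficients `a` and fragmentation coefficients `b`: a family of
non-negative continuously differentiable functions `c i : [0,∞) → ℝ`
(`i ≥ 1`) with finite density `∑_{i ≥ 1} i c_i(t) < ∞`, satisfying
`(d/dt) c_i = W_{i-1} - W_i` for `i ≥ 2` and
`(d/dt) c_1 = -W_1 - ∑_{k ≥ 1} W_k`, where
`W_i(t) = a_i c_1(t) c_i(t) - b_{i+1} c_{i+1}(t)`. -/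
structure IsBDSolution (a b : ℕ → ℝ) (c : ℕ → ℝ → ℝ) : Prop where
  nonneg : ∀ i : ℕ, 1 ≤ i → ∀ t : ℝ, 0 ≤ t → 0 ≤ c i t
  densSummable : ∀ t : ℝ, 0 ≤ t →
    Summable fun i : ℕ => ((i : ℝ) + 1) * c (i + 1) t
  Wsummable : ∀ t : ℝ, 0 ≤ t → Summable fun k : ℕ =>
    a (k + 1) * c 1 t * c (k + 1) t - b (k + 2) * c (k + 2) t
  ode : ∀ i : ℕ, 2 ≤ i → ∀ t : ℝ, 0 ≤ t →
    HasDerivWithinAt (c i)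
      ((a (i - 1) * c 1 t * c (i - 1) t - b i * c i t)
        - (a i * c 1 t * c i t - b (i + 1) * c (i + 1) t)) (Set.Ici 0) t
  ode1 : ∀ t : ℝ, 0 ≤ t →
    HasDerivWithinAt (c 1)
      (-(a 1 * c 1 t * c 1 t - b 2 * c 2 t)
        - ∑' k : ℕ, (a (k + 1) * c 1 t * c (k + 1) t - b (k + 2) * c (k + 2) t))
      (Set.Ici 0) t

/-- The tail density `G_j(t) = ∑_{i ≥ j} c_i(t)`. -/
noncomputable def tailDensity (c : ℕ → ℝ → ℝ) (j : ℕ) (t : ℝ) : ℝ :=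
  ∑' i : ℕ, c (j + i) t

/-!
Summing the equations for `c_i`, `j ≤ i < j + n`, gives
`G_j(s') - G_j(s) = ∫_s^{s'} W_{j-1} - lim_n ∫_s^{s'} W_n`, and the limit `ℓ(s, s')` (the flux of
clusters escaping to infinite size) does not depend on `j`. Linear growth of the coefficients
gives `|∫_s^{s'} W_n| ≤ C n (∫_s^{s'} c_n + ∫_s^{s'} c_{n+1})`, so when `G_2` is integrable on
`[s, s']` the series `∑ (∫_s^{s'} W_n) / n` converges and `ℓ(s, s') = 0` because the harmonic series
diverges. Hence `G_2(t) - ∫_0^t W_1` is constant on every interval on which `G_2` is integrable.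
As `G_2` is lower semicontinuous, a Baire category argument upgrades this to integrability of `G_2`
on every bounded interval, and the evolution equation follows from the fundamental theorem of
calculus.
-/

open MeasureTheory Metric

theorem eq_zero_of_tendsto_of_summable_div {u : ℕ → ℝ} {ℓ : ℝ} (hu : Tendsto u atTop (𝓝 ℓ))
    (hs : Summable fun n => u n / n) : ℓ = 0 := by
  by_contra hℓ
  have hℓ0 : 0 < |ℓ| := abs_pos.2 hℓ
  refine Real.not_summable_natCast_inv ((hs.abs.mul_left (2 / |ℓ|)).of_norm_bounded_eventually ?_)
  rw [Nat.cofinite_eq_atTop]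
  filter_upwards [(continuous_abs.tendsto ℓ).comp hu |>.eventually
    (lt_mem_nhds (half_lt_self hℓ0))] with n hn
  have hun : 1 ≤ 2 / |ℓ| * |u n| := by
    rw [div_mul_eq_mul_div, le_div_iff₀ hℓ0]
    simp only [Function.comp_apply] at hn
    linarith
  rw [norm_inv, Real.norm_natCast, abs_div, Nat.abs_cast, ← mul_div_assoc, div_eq_mul_inv]
  exact le_mul_of_one_le_left (by positivity) hun

theorem lowerSemicontinuousOn_tsum_of_nonneg {X : Type*} [TopologicalSpace X] {u : ℕ → X → ℝ}
    {s : Set X} (hu : ∀ i, ContinuousOn (u i) s) (h0 : ∀ i, ∀ x ∈ s, 0 ≤ u i x)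
    (hs : ∀ x ∈ s, Summable fun i => u i x) : LowerSemicontinuousOn (fun x => ∑' i, u i x) s := by
  intro x hx y hy
  obtain ⟨n, hn⟩ := ((hs x hx).hasSum.tendsto_sum_nat.eventually (lt_mem_nhds hy)).exists
  filter_upwards [(continuousOn_finsetSum _ fun i _ => hu i) x hx |>.eventually (lt_mem_nhds hn),
    self_mem_nhdsWithin] with z hz hzs
  exact hz.trans_le ((hs z hzs).sum_le_tsum _ fun i _ => h0 i z hzs)

theorem ContinuousOn.hasDerivWithinAt_integral_Ici {w : ℝ → ℝ} (hw : ContinuousOn w (Ici 0))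
    {t : ℝ} (ht : 0 ≤ t) : HasDerivWithinAt (fun u => ∫ τ in (0 : ℝ)..u, w τ) (w t) (Ici 0) t := by
  have hw' : Continuous fun τ => w (max τ 0) :=
    hw.comp_continuous (continuous_id.max continuous_const) fun τ => le_max_right τ 0
  have heq : ∀ u ∈ Ici (0 : ℝ), ∫ τ in (0 : ℝ)..u, w τ = ∫ τ in (0 : ℝ)..u, w (max τ 0) :=
    fun u hu => intervalIntegral.integral_congr fun τ hτ => by
      rw [max_eq_left (by exact (le_min le_rfl hu).trans hτ.1)]
  simpa [max_eq_left ht] using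
    (hw'.integral_hasStrictDerivAt 0 t).hasDerivAt.hasDerivWithinAt.congr heq (heq t ht)

theorem isClosed_setOf_not_integrableAtFilter {X E : Type*} [TopologicalSpace X]
    [MeasurableSpace X] [NormedAddCommGroup E] (f : X → E) (μ : Measure X) :
    IsClosed {x | ¬ IntegrableAtFilter f (𝓝 x) μ} := by
  refine isOpen_compl_iff.1 (isOpen_iff_mem_nhds.2 fun x hx => ?_)
  obtain ⟨U, hU, hfU⟩ := not_not.1 hx
  filter_upwards [eventually_mem_nhds_iff.2 hU] with y hy using not_not.2 ⟨U, hy, hfU⟩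

theorem exists_ball_forall_le_of_lowerSemicontinuous {X : Type*} [MetricSpace X]
    [CompleteSpace X] {F : Set X} (hF : IsClosed F) (hne : F.Nonempty) {f : X → ℝ}
    (hf : LowerSemicontinuous f) :
    ∃ x ∈ F, ∃ ε > 0, ∃ m : ℝ, ∀ y ∈ F, dist y x < ε → f y ≤ m := by
  have : CompleteSpace F := hF.completeSpace_coe
  have : Nonempty F := hne.to_subtype
  obtain ⟨m, z, hz⟩ := nonempty_interior_of_iUnion_of_closed
    (f := fun m : ℕ => {y : F | f y ≤ m})
    (fun m => (hf.isClosed_preimage (m : ℝ)).preimage continuous_subtype_val)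
    (iUnion_eq_univ_iff.2 fun y => exists_nat_ge (f y))
  obtain ⟨ε, hε, hball⟩ := Metric.isOpen_iff.1 isOpen_interior z hz
  exact ⟨z, z.2, ε, hε, m, fun y hy hyz =>
    interior_subset (s := {y : F | f y ≤ m}) (@hball ⟨y, hy⟩ hyz)⟩

theorem sub_eq_of_integrableAtFilter_uIoo {f g : ℝ → ℝ} (hfm : AEStronglyMeasurable f volume)
    (hg : Continuous g) (h : ∀ s s', IntervalIntegrable f volume s s' → f s - g s = f s' - g s')
    {a b : ℝ} (hloc : ∀ x ∈ uIoo a b, IntegrableAtFilter f (𝓝 x) volume) :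
    f a - g a = f b - g b := by
  wlog hab : a < b generalizing a b
  · rcases (not_lt.1 hab).eq_or_lt with rfl | hba
    · rfl
    · exact (this (by rwa [uIoo_comm]) hba).symm
  have hloc' : LocallyIntegrableOn f (Ioo a b) volume := fun x hx =>
    (hloc x (by rwa [uIoo_of_lt hab])).filter_mono nhdsWithin_le_nhds
  obtain ⟨m, hm⟩ := nonempty_Ioo.2 hab
  have hconst : ∀ y ∈ Ioo a b, f y - g y = f m - g m := fun y hy =>
    h y m (hloc'.integrableOn_compact_subset (ordConnected_Ioo.uIcc_subset hy hm)
      isCompact_uIcc).intervalIntegrable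
  obtain ⟨B, hB⟩ := isCompact_Icc.exists_bound_of_continuousOn (hg.continuousOn (s := Icc a b))
  have hint : IntegrableOn f (Ioo a b) volume := by
    refine Measure.integrableOn_of_bounded measure_Ioo_lt_top.ne hfm (M := |f m - g m| + B)
      (ae_restrict_of_forall_mem measurableSet_Ioo fun y hy => ?_)
    have hgy := hB y (Ioo_subset_Icc_self hy)
    rw [Real.norm_eq_abs] at hgy ⊢
    calc |f y| = |(f y - g y) + g y| := by ring_nf
      _ ≤ |f m - g m| + B := by rw [hconst y hy]; exact (abs_add_le _ _).trans (by linarith)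
  exact h a b ((intervalIntegrable_iff_integrableOn_Ioo_of_le hab.le).2 hint)

theorem IsClosed.exists_mem_closedBall_forall_uIoo_notMem {F : Set ℝ} (hF : IsClosed F)
    {x z r : ℝ} (hx : x ∈ F) (hr : 0 ≤ r) (hz : z ∈ closedBall x r) :
    ∃ e ∈ F ∩ closedBall x r, ∀ y ∈ uIoo z e, y ∉ F := by
  obtain ⟨e, he, hde⟩ := ((isCompact_closedBall x r).inter_left hF).exists_infDist_eq_dist
    ⟨x, hx, mem_closedBall_self hr⟩ z
  refine ⟨e, he, fun y hy hyF => ?_⟩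
  have hyK : y ∈ F ∩ closedBall x r := by
    refine ⟨hyF, ?_⟩
    rw [Real.closedBall_eq_Icc] at hz he ⊢
    exact ordConnected_Icc.uIcc_subset hz he.2 (Ioo_subset_Icc_self hy)
  have hzy : dist z y < dist z e := by
    rw [Real.dist_eq, Real.dist_eq]
    rcases le_total z e with hze | hze
    · rw [uIoo_of_le hze] at hy
      rw [abs_of_neg (by linarith [hy.1]), abs_of_nonpos (by linarith)]
      linarith [hy.2]
    · rw [uIoo_of_ge hze] at hy
      rw [abs_of_pos (by linarith [hy.2]), abs_of_nonneg (by linarith)]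
      linarith [hy.1]
  linarith [infDist_le_dist_of_mem (x := z) hyK]

/- Let `F` be the closed set of points near which `f` is not integrable. By Baire's theorem `f` is
bounded on `F ∩ ball x ε` for some `x ∈ F`. Across each gap of `F` the difference `f - g` is
constant, which extends this bound to the whole ball `ball x (ε / 2)`, so that in fact `x ∉ F`. -/
theorem locallyIntegrable_of_sub_eq_of_intervalIntegrable {f g : ℝ → ℝ}
    (hf : LowerSemicontinuous f) (hf0 : 0 ≤ f) (hg : Continuous g)
    (h : ∀ s s', IntervalIntegrable f volume s s' → f s - g s = f s' - g s') :
    LocallyIntegrable f volume := by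
  set F := {x | ¬ IntegrableAtFilter f (𝓝 x) volume}
  have hF : IsClosed F := isClosed_setOf_not_integrableAtFilter f volume
  have hfm : AEStronglyMeasurable f volume := hf.measurable.aestronglyMeasurable
  suffices F = ∅ from fun x => not_not.1 (eq_empty_iff_forall_notMem.1 this x)
  by_contra hne
  obtain ⟨x, hxF, ε, hε, m, hm⟩ :=
    exists_ball_forall_le_of_lowerSemicontinuous hF (nonempty_iff_ne_empty.2 hne) hf
  obtain ⟨B, hB⟩ := (isCompact_closedBall x ε).exists_bound_of_continuousOn hg.continuousOn
  have hsub : closedBall x (ε / 2) ⊆ closedBall x ε := closedBall_subset_closedBall (by linarith)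
  have hbound : ∀ z ∈ ball x (ε / 2), f z ≤ m + 2 * B := by
    intro z hz
    have hz' := ball_subset_closedBall hz
    have hB0 : 0 ≤ B := (abs_nonneg _).trans (hB x (mem_closedBall_self hε.le))
    by_cases hzF : z ∈ F
    · linarith [hm z hzF (ball_subset_ball (half_le_self hε.le) hz)]
    obtain ⟨e, ⟨heF, he⟩, hgap⟩ := hF.exists_mem_closedBall_forall_uIoo_notMem hxF (by linarith) hz'
    have hze := sub_eq_of_integrableAtFilter_uIoo hfm hg h fun y hy => not_not.1 (hgap y hy)
    have hgz := abs_le.1 (hB z (hsub hz'))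
    have hge := abs_le.1 (hB e (hsub he))
    linarith [hm e heF (closedBall_subset_ball (half_lt_self hε) he)]
  refine hxF ⟨ball x (ε / 2), ball_mem_nhds x (half_pos hε),
    Measure.integrableOn_of_bounded measure_ball_lt_top.ne hfm (M := m + 2 * B)
      (ae_restrict_of_forall_mem measurableSet_ball fun z hz => ?_)⟩
  rw [Real.norm_eq_abs, abs_of_nonneg (hf0 z)]
  exact hbound z hz

theorem intervalIntegrable_of_sub_eq_of_intervalIntegrable_Ici {f g : ℝ → ℝ}
    (hf : LowerSemicontinuousOn f (Ici 0)) (hf0 : ∀ t, 0 ≤ t → 0 ≤ f t)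
    (hg : ContinuousOn g (Ici 0))
    (h : ∀ s s', 0 ≤ s → s ≤ s' → IntervalIntegrable f volume s s' → f s - g s = f s' - g s')
    {s s' : ℝ} (hs : 0 ≤ s) (hs' : 0 ≤ s') : IntervalIntegrable f volume s s' := by
  set p : ℝ → ℝ := fun t => max t 0
  have hp : Continuous p := continuous_id.max continuous_const
  have hpI : MapsTo p univ (Ici 0) := fun t _ => le_max_right t 0
  have hpeq : ∀ {u v : ℝ}, 0 ≤ u → 0 ≤ v → EqOn (f ∘ p) f (uIcc u v) := fun hu hv t ht =>
    congrArg f (max_eq_left ((le_min hu hv).trans ht.1))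
  have hF : LocallyIntegrable (f ∘ p) volume := by
    refine locallyIntegrable_of_sub_eq_of_intervalIntegrable
      (lowerSemicontinuousOn_univ_iff.1 (hf.comp hp.continuousOn hpI))
      (fun t => hf0 _ (le_max_right t 0)) (hg.comp_continuous hp (fun t => le_max_right t 0))
      fun u v huv => ?_
    wlog hle : u ≤ v generalizing u v
    · exact (this v u huv.symm (le_of_not_ge hle)).symm
    rcases le_total v 0 with hv | hv
    · simp [p, max_eq_right hv, max_eq_right (hle.trans hv)]
    have hσ : u ≤ max u 0 := le_max_left u 0
    have := h (max u 0) v (le_max_right u 0) (max_le hle hv) ((huv.mono_set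
      (uIcc_subset_uIcc (mem_uIcc_of_le hσ (max_le hle hv)) right_mem_uIcc)).congr
      ((hpeq (le_max_right u 0) hv).mono uIoc_subset_uIcc))
    simpa [p, max_eq_left hv] using this
  exact (hF.integrableOn_isCompact isCompact_uIcc).intervalIntegrable.congr
    ((hpeq hs hs').mono uIoc_subset_uIcc)

/-- The flux `W_k(t)` of the Becker–Döring equations. -/
def bdFlux (a b : ℕ → ℝ) (c : ℕ → ℝ → ℝ) (k : ℕ) (t : ℝ) : ℝ :=
  a k * c 1 t * c k t - b (k + 1) * c (k + 1) t

namespace IsBDSolution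

variable {a b : ℕ → ℝ} {c : ℕ → ℝ → ℝ} {j k : ℕ} {s s' t : ℝ}

theorem continuousOn (hc : IsBDSolution a b c) (hj : 1 ≤ j) : ContinuousOn (c j) (Ici 0) := by
  rcases hj.eq_or_lt with rfl | hj
  · exact fun t ht => (hc.ode1 t ht).continuousWithinAt
  · exact fun t ht => (hc.ode j hj t ht).continuousWithinAt

theorem continuousOn_bdFlux (hc : IsBDSolution a b c) (hk : 1 ≤ k) :
    ContinuousOn (bdFlux a b c k) (Ici 0) :=
  ((continuousOn_const.mul (hc.continuousOn le_rfl)).mul (hc.continuousOn hk)).sub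
    (continuousOn_const.mul (hc.continuousOn (by omega)))

theorem hasDerivWithinAt_succ (hc : IsBDSolution a b c) (hk : 1 ≤ k) (ht : 0 ≤ t) :
    HasDerivWithinAt (c (k + 1)) (bdFlux a b c k t - bdFlux a b c (k + 1) t) (Ici 0) t := by
  simpa [bdFlux] using hc.ode (k + 1) (by omega) t ht

theorem summable_tail (hc : IsBDSolution a b c) (hj : 1 ≤ j) (ht : 0 ≤ t) :
    Summable fun i => c (j + i) t := by
  have h : Summable fun i => c (i + 1) t :=
    (hc.densSummable t ht).of_nonneg_of_le (fun i => hc.nonneg _ (by omega) t ht) fun i =>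
      le_mul_of_one_le_left (hc.nonneg _ (by omega) t ht) (by simp)
  obtain ⟨j, rfl⟩ : ∃ i, j = i + 1 := ⟨j - 1, by omega⟩
  exact ((summable_nat_add_iff j).2 h).congr fun i => by rw [show i + j + 1 = j + 1 + i by omega]

theorem tailDensity_eq_add (hc : IsBDSolution a b c) (hj : 1 ≤ j) (ht : 0 ≤ t) :
    tailDensity c j t = c j t + tailDensity c (j + 1) t := by
  simpa [tailDensity, add_assoc, add_comm 1] using (hc.summable_tail hj ht).tsum_eq_zero_add

theorem tailDensity_nonneg (hc : IsBDSolution a b c) (hj : 1 ≤ j) (ht : 0 ≤ t) :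
    0 ≤ tailDensity c j t :=
  tsum_nonneg fun i => hc.nonneg _ (by omega) t ht

theorem bdFlux_eq (hc : IsBDSolution a b c) (hk : 1 ≤ k) (ht : 0 ≤ t) :
    bdFlux a b c k t = a k * c 1 t * (tailDensity c k t - tailDensity c (k + 1) t)
      + b (k + 1) * (tailDensity c (k + 2) t - tailDensity c (k + 1) t) := by
  rw [hc.tailDensity_eq_add hk ht, hc.tailDensity_eq_add (j := k + 1) (by omega) ht, bdFlux]
  ring

theorem integral_bdFlux_sub_integral_bdFlux_succ (hc : IsBDSolution a b c) (hk : 1 ≤ k)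
    (hs : 0 ≤ s) (hss : s ≤ s') :
    (∫ t in s..s', bdFlux a b c k t) - ∫ t in s..s', bdFlux a b c (k + 1) t
      = c (k + 1) s' - c (k + 1) s := by
  have hI : Icc s s' ⊆ Ici 0 := fun t ht => hs.trans ht.1
  have hint : ∀ {k}, 1 ≤ k → IntervalIntegrable (bdFlux a b c k) volume s s' := fun hk =>
    ((hc.continuousOn_bdFlux hk).mono (uIcc_of_le hss ▸ hI)).intervalIntegrable
  rw [← intervalIntegral.integral_sub (hint hk) (hint (by omega))]
  exact intervalIntegral.integral_eq_sub_of_hasDeriv_right_of_le hss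
    ((hc.continuousOn (by omega)).mono hI)
    (fun t ht => (hc.hasDerivWithinAt_succ hk (hs.trans ht.1.le)).mono
      fun u hu => hs.trans (ht.1.trans hu).le)
    ((hint hk).sub (hint (by omega)))

theorem tendsto_integral_bdFlux (hc : IsBDSolution a b c) (hk : 1 ≤ k) (hs : 0 ≤ s)
    (hss : s ≤ s') :
    Tendsto (fun n => ∫ t in s..s', bdFlux a b c (k + n) t) atTop
      (𝓝 ((∫ t in s..s', bdFlux a b c k t)
        - (tailDensity c (k + 1) s' - tailDensity c (k + 1) s))) := by
  have hsum : HasSum (fun i => c (k + 1 + i) s' - c (k + 1 + i) s)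
      (tailDensity c (k + 1) s' - tailDensity c (k + 1) s) :=
    (hc.summable_tail (by omega) (hs.trans hss)).hasSum.sub (hc.summable_tail (by omega) hs).hasSum
  refine (tendsto_const_nhds.sub hsum.tendsto_sum_nat).congr fun n => ?_
  induction n with
  | zero => simp
  | succ n ih =>
    have hstep := hc.integral_bdFlux_sub_integral_bdFlux_succ (k := k + n) (by omega) hs hss
    rw [Finset.sum_range_succ, ← sub_sub, ih, add_right_comm, ← hstep, ← add_assoc]
    ring

theorem intervalIntegrable (hc : IsBDSolution a b c) (hj : 1 ≤ j) (hs : 0 ≤ s) (hs' : 0 ≤ s') :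
    IntervalIntegrable (c j) volume s s' :=
  ((hc.continuousOn hj).mono fun _ ht => (le_min hs hs').trans ht.1).intervalIntegrable

theorem summable_integral (hc : IsBDSolution a b c) (hs : 0 ≤ s) (hss : s ≤ s')
    (hG : IntervalIntegrable (tailDensity c 2) volume s s') :
    Summable fun i => ∫ t in s..s', c (2 + i) t := by
  have hs' := hs.trans hss
  refine summable_of_sum_range_le (c := ∫ t in s..s', tailDensity c 2 t)
    (fun i => intervalIntegral.integral_nonneg hss fun t ht =>
      hc.nonneg _ (by omega) t (hs.trans ht.1)) fun n => ?_
  have hint : ∀ i ∈ Finset.range n, IntervalIntegrable (c (2 + i)) volume s s' :=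
    fun i _ => hc.intervalIntegrable (by omega) hs hs'
  rw [← intervalIntegral.integral_finsetSum hint]
  refine intervalIntegral.integral_mono_on hss
    (by simpa only [Finset.sum_fn] using IntervalIntegrable.sum _ hint) hG fun t ht => ?_
  exact (hc.summable_tail (by omega) (hs.trans ht.1)).sum_le_tsum _
    fun i _ => hc.nonneg _ (by omega) t (hs.trans ht.1)

section LinearGrowth

variable {A M : ℝ}

theorem abs_bdFlux_le (hc : IsBDSolution a b c) (ha : ∀ k, 1 ≤ k → |a k| ≤ A * k)
    (hb : ∀ k, 2 ≤ k → |b k| ≤ A * k) (hk : 1 ≤ k) (ht : 0 ≤ t) (hM : |c 1 t| ≤ M) :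
    |bdFlux a b c k t| ≤ A * (M + 2) * k * (c k t + c (k + 1) t) := by
  have hck := hc.nonneg k hk t ht
  have hck' := hc.nonneg (k + 1) (by omega) t ht
  have hA : 0 ≤ A := by simpa using (abs_nonneg _).trans (ha 1 le_rfl)
  have hM0 : 0 ≤ M := (abs_nonneg _).trans hM
  have hk' : (1 : ℝ) ≤ k := by exact_mod_cast hk
  calc |bdFlux a b c k t| ≤ |a k * c 1 t * c k t| + |b (k + 1) * c (k + 1) t| := abs_sub _ _
    _ = |a k| * |c 1 t| * c k t + |b (k + 1)| * c (k + 1) t := by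
      rw [abs_mul, abs_mul, abs_mul, abs_of_nonneg hck, abs_of_nonneg hck']
    _ ≤ A * k * M * c k t + A * (k + 1 : ℕ) * c (k + 1) t := by
      gcongr
      exacts [ha k hk, hb (k + 1) (by omega)]
    _ ≤ A * (M + 2) * k * (c k t + c (k + 1) t) := by
      push_cast
      nlinarith [mul_nonneg (mul_nonneg hA hck') (sub_nonneg.2 hk'),
        mul_nonneg (mul_nonneg hA hck') (mul_nonneg hM0 (by linarith : (0 : ℝ) ≤ k)),
        mul_nonneg (mul_nonneg hA hck) (by linarith : (0 : ℝ) ≤ 2 * k)]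

theorem abs_integral_bdFlux_le (hc : IsBDSolution a b c) (ha : ∀ k, 1 ≤ k → |a k| ≤ A * k)
    (hb : ∀ k, 2 ≤ k → |b k| ≤ A * k) (hk : 1 ≤ k) (hs : 0 ≤ s) (hss : s ≤ s')
    (hM : ∀ t ∈ Icc s s', |c 1 t| ≤ M) :
    |∫ t in s..s', bdFlux a b c k t|
      ≤ A * (M + 2) * k * ((∫ t in s..s', c k t) + ∫ t in s..s', c (k + 1) t) := by
  have hs' := hs.trans hss
  rw [← intervalIntegral.integral_add (hc.intervalIntegrable hk hs hs')
    (hc.intervalIntegrable (by omega) hs hs'), ← intervalIntegral.integral_const_mul,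
    ← Real.norm_eq_abs]
  refine intervalIntegral.norm_integral_le_of_norm_le hss (ae_of_all _ fun t ht =>
    (Real.norm_eq_abs _).trans_le <|
      hc.abs_bdFlux_le ha hb hk (hs.trans ht.1.le) (hM t (Ioc_subset_Icc_self ht))) ?_
  exact ((hc.intervalIntegrable hk hs hs').add
    (hc.intervalIntegrable (by omega) hs hs')).const_mul _

theorem summable_integral_bdFlux_div (hc : IsBDSolution a b c)
    (ha : ∀ k, 1 ≤ k → |a k| ≤ A * k) (hb : ∀ k, 2 ≤ k → |b k| ≤ A * k) (hs : 0 ≤ s)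
    (hss : s ≤ s') (hG : IntervalIntegrable (tailDensity c 2) volume s s') :
    Summable fun n : ℕ => (∫ t in s..s', bdFlux a b c n t) / n := by
  obtain ⟨M, hM⟩ := isCompact_Icc.exists_bound_of_continuousOn
    ((hc.continuousOn le_rfl).mono fun t (ht : t ∈ Icc s s') => hs.trans ht.1)
  set I : ℕ → ℝ := fun i => ∫ t in s..s', c i t
  have hI : Summable I :=
    (summable_nat_add_iff 2).1 (by simpa only [I, add_comm] using hc.summable_integral hs hss hG)
  refine Summable.of_norm_bounded_eventually
    ((hI.add ((summable_nat_add_iff 1).2 hI)).mul_left (A * (M + 2))) ?_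
  rw [Nat.cofinite_eq_atTop]
  filter_upwards [eventually_ge_atTop 1] with n hn
  rw [Real.norm_eq_abs, abs_div, Nat.abs_cast, div_le_iff₀ (by exact_mod_cast hn)]
  calc _ ≤ A * (M + 2) * n * (I n + I (n + 1)) := hc.abs_integral_bdFlux_le ha hb hn hs hss hM
    _ = _ := by ring

theorem tailDensity_sub_eq_integral_bdFlux (hc : IsBDSolution a b c)
    (ha : ∀ k, 1 ≤ k → |a k| ≤ A * k) (hb : ∀ k, 2 ≤ k → |b k| ≤ A * k) (hk : 1 ≤ k)
    (hs : 0 ≤ s) (hss : s ≤ s') (hG : IntervalIntegrable (tailDensity c 2) volume s s') :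
    tailDensity c (k + 1) s' - tailDensity c (k + 1) s = ∫ t in s..s', bdFlux a b c k t := by
  have hW : Tendsto (fun n => ∫ t in s..s', bdFlux a b c n t) atTop (𝓝 0) := by
    have h := (tendsto_add_atTop_iff_nat (f := fun n => ∫ t in s..s', bdFlux a b c n t) 1).1
      (by simpa only [add_comm 1] using hc.tendsto_integral_bdFlux le_rfl hs hss)
    rwa [eq_zero_of_tendsto_of_summable_div h (hc.summable_integral_bdFlux_div ha hb hs hss hG)]
      at h
  have h := tendsto_nhds_unique (hc.tendsto_integral_bdFlux hk hs hss)
    (by simpa only [add_comm k] using (tendsto_add_atTop_iff_nat k).2 hW)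
  linarith

theorem lowerSemicontinuousOn_tailDensity (hc : IsBDSolution a b c) (hj : 1 ≤ j) :
    LowerSemicontinuousOn (tailDensity c j) (Ici 0) :=
  lowerSemicontinuousOn_tsum_of_nonneg (fun _ => hc.continuousOn (by omega))
    (fun _ t ht => hc.nonneg _ (by omega) t ht) fun _ ht => hc.summable_tail hj ht

theorem intervalIntegrable_tailDensity (hc : IsBDSolution a b c)
    (ha : ∀ k, 1 ≤ k → |a k| ≤ A * k) (hb : ∀ k, 2 ≤ k → |b k| ≤ A * k) (hs : 0 ≤ s)
    (hs' : 0 ≤ s') : IntervalIntegrable (tailDensity c 2) volume s s' := by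
  have hW := hc.continuousOn_bdFlux le_rfl
  refine intervalIntegrable_of_sub_eq_of_intervalIntegrable_Ici
    (hc.lowerSemicontinuousOn_tailDensity one_le_two)
    (fun t ht => hc.tailDensity_nonneg one_le_two ht)
    (g := fun t => ∫ τ in (0 : ℝ)..t, bdFlux a b c 1 τ)
    (fun t ht => (hW.hasDerivWithinAt_integral_Ici ht).continuousWithinAt)
    (fun u v hu huv hG => ?_) hs hs'
  have hint : ∀ {w}, 0 ≤ w → IntervalIntegrable (bdFlux a b c 1) volume 0 w := fun hw =>
    (hW.mono fun _ ht => (le_min le_rfl hw).trans ht.1).intervalIntegrable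
  have h : tailDensity c 2 v - tailDensity c 2 u = ∫ t in u..v, bdFlux a b c 1 t :=
    hc.tailDensity_sub_eq_integral_bdFlux ha hb le_rfl hu huv hG
  rw [← intervalIntegral.integral_interval_sub_left (hint (hu.trans huv)) (hint hu)] at h
  linarith

theorem hasDerivWithinAt_tailDensity (hc : IsBDSolution a b c)
    (ha : ∀ k, 1 ≤ k → |a k| ≤ A * k) (hb : ∀ k, 2 ≤ k → |b k| ≤ A * k) (hk : 1 ≤ k)
    (ht : 0 ≤ t) : HasDerivWithinAt (tailDensity c (k + 1)) (bdFlux a b c k t) (Ici 0) t := by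
  have heq : ∀ u ∈ Ici (0 : ℝ),
      tailDensity c (k + 1) u = tailDensity c (k + 1) 0 + ∫ τ in (0 : ℝ)..u, bdFlux a b c k τ :=
    fun u hu => by
      linarith [hc.tailDensity_sub_eq_integral_bdFlux ha hb hk le_rfl hu
        (hc.intervalIntegrable_tailDensity ha hb le_rfl hu)]
  exact (((hc.continuousOn_bdFlux hk).hasDerivWithinAt_integral_Ici ht).const_add _).congr
    heq (heq t ht)

end LinearGrowth

end IsBDSolution

theorem BDH1.exists_abs_le_mul {a b : ℕ → ℝ} {γ : ℝ} (h : BDH1 a γ)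
    (ha : ∀ i : ℕ, 1 ≤ i → 0 < a i) (hb : ∀ i : ℕ, 2 ≤ i → 0 < b i)
    (hba : ∃ bbar : ℝ, 0 < bbar ∧ ∀ i : ℕ, 1 ≤ i → b i ≤ bbar * a i) :
    ∃ A : ℝ, (∀ k, 1 ≤ k → |a k| ≤ A * k) ∧ ∀ k, 2 ≤ k → |b k| ≤ A * k := by
  obtain ⟨C, hC⟩ : ∃ C : ℝ, ∀ i : ℕ, 1 ≤ i → a i ≤ C * i := by
    rcases h with ⟨-, hγ, abar, habar, hle⟩ | ⟨-, C₁, C₂, -, -, hle⟩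
    · refine ⟨abar, fun i hi => (hle i hi).trans (mul_le_mul_of_nonneg_left ?_ habar.le)⟩
      simpa using Real.rpow_le_rpow_of_exponent_le (by exact_mod_cast hi : (1 : ℝ) ≤ i) hγ.le
    · exact ⟨C₂, fun i hi => (hle i hi).2⟩
  obtain ⟨bbar, hbbar, hba⟩ := hba
  refine ⟨max C (bbar * C), fun k hk => ?_, fun k hk => ?_⟩
  · rw [abs_of_pos (ha k hk)]
    exact (hC k hk).trans (by gcongr; exact le_max_left _ _)
  · rw [abs_of_pos (hb k hk)]
    calc b k ≤ bbar * (C * k) := (hba k (by omega)).trans (by gcongr; exact hC k (by omega))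
      _ ≤ max C (bbar * C) * k := by rw [← mul_assoc]; gcongr; exact le_max_right _ _

/-- **Evolution equation for the tail density.**  If `c` is a solution of the
Becker–Döring equations with non-negative initial datum of finite density and
(H1), (H2) hold, then for each `j ≥ 2` the tail density
`G_j(t) = ∑_{i ≥ j} c_i(t)` is continuously differentiable on `[0,∞)` and
`(d/dt) G_j(t) = a_{j-1} c_1(t) (G_{j-1}(t) - G_j(t)) + b_j (G_{j+1}(t) - G_j(t))`. -/
theorem tail_density_evolution
    (a b : ℕ → ℝ) (γ : ℝ) (c : ℕ → ℝ → ℝ)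
    (hapos : ∀ i : ℕ, 1 ≤ i → 0 < a i)
    (hbpos : ∀ i : ℕ, 2 ≤ i → 0 < b i)
    (hH1 : BDH1 a γ)
    (hH2 : ∃ bbar : ℝ, 0 < bbar ∧ ∀ i : ℕ, 1 ≤ i → b i ≤ bbar * a i)
    (hsol : IsBDSolution a b c) :
    ∀ j : ℕ, 2 ≤ j →
      (∀ t : ℝ, 0 ≤ t →
        HasDerivWithinAt (tailDensity c j)
          (a (j - 1) * c 1 t * (tailDensity c (j - 1) t - tailDensity c j t)
            + b j * (tailDensity c (j + 1) t - tailDensity c j t))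
          (Set.Ici 0) t)
      ∧ ContinuousOn
          (fun t : ℝ =>
            a (j - 1) * c 1 t * (tailDensity c (j - 1) t - tailDensity c j t)
              + b j * (tailDensity c (j + 1) t - tailDensity c j t))
          (Set.Ici 0) := by
  obtain ⟨A, ha, hb⟩ := hH1.exists_abs_le_mul hapos hbpos hH2
  intro j hj
  obtain ⟨k, rfl⟩ : ∃ k, j = k + 1 := ⟨j - 1, by omega⟩
  have hk : 1 ≤ k := by omega
  simp only [Nat.add_sub_cancel, add_assoc, Nat.reduceAdd]
  refine ⟨fun t ht => ?_,
    (hsol.continuousOn_bdFlux hk).congr fun t ht => (hsol.bdFlux_eq hk ht).symm⟩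
  rw [← hsol.bdFlux_eq hk ht]
  exact hsol.hasDerivWithinAt_tailDensity ha hb hk ht
end

section
/- Maximum principle for linear ODE systems with Metzler matrices: Let n ≥ 1, T > 0, and let u = (u_1, …, u_n) : [0,T) → ℝⁿ be continuously differentiable. Let A be a constant n × n real matrix whose off-diagonal entries are all non-negative (i.e. A_{ij} ≥ 0 whenever i ≠ j), and assume that (d/dt) u_i(t) ≤ (A u(t))_i for every i = 1, …, n and every t ∈ [0,T). If u_i(0) ≤ 0 for all i, then u_i(t) ≤ 0 for all i = 1, …, n and all t ∈ [0,T). -/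
/-!
Let `F t = maxⱼ (u j t)⁺`. Then `F 0 = 0`, and `F` has right upper Dini derivative at most
`K * F` for a constant `K ≥ 0` bounding the row sums of `A`: if the maximum at `t` is attained
by an index `j` with `u j t ≥ 0`, then `u j t = F t ≥ u k t` for all `k`, so since the
off-diagonal entries are nonnegative, `u' j t ≤ ∑ₖ A j k * u k t ≤ (∑ₖ A j k) * F t`.
Gronwall's inequality then gives `F ≡ 0`.
-/

open Set Filter Topology Finset

theorem posPart_sub_posPart_le {α : Type*} [AddCommGroup α] [LinearOrder α]
    [IsOrderedAddMonoid α] (a b : α) : a⁺ - b⁺ ≤ (a - b)⁺ :=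
  (max_sub_max_le_max a 0 b 0).trans_eq (by rw [sub_zero]; rfl)

theorem slope_posPart_le {g : ℝ → ℝ} {x z : ℝ} (hxz : x < z) :
    slope (fun t => (g t)⁺) x z ≤ (slope g x z)⁺ := by
  have hinv : 0 ≤ (z - x)⁻¹ := inv_nonneg.mpr (sub_pos.mpr hxz).le
  simp only [slope_def_field, div_eq_inv_mul]
  calc (z - x)⁻¹ * ((g z)⁺ - (g x)⁺) ≤ (z - x)⁻¹ * (g z - g x)⁺ :=
        mul_le_mul_of_nonneg_left (posPart_sub_posPart_le _ _) hinv
    _ = ((z - x)⁻¹ * (g z - g x))⁺ := by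
        simp only [posPart_def, mul_max_of_nonneg _ _ hinv, mul_zero]

theorem eventually_slope_posPart_lt {g : ℝ → ℝ} {g' c r x : ℝ}
    (hg : HasDerivWithinAt g g' (Ioi x) x) (hc : 0 ≤ c) (hbound : 0 ≤ g x → g' ≤ c)
    (hr : c < r) : ∀ᶠ z in 𝓝[>] x, slope (fun t => (g t)⁺) x z < r := by
  rcases lt_or_ge (g x) 0 with hneg | hnonneg
  · filter_upwards [hg.continuousWithinAt.eventually_lt_const hneg] with z hz
    simp [slope_def_field, posPart_eq_zero.mpr hz.le, posPart_eq_zero.mpr hneg.le,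
      hc.trans_lt hr]
  · have hslope : Tendsto (slope g x) (𝓝[>] x) (𝓝 g') :=
      (hasDerivWithinAt_iff_tendsto_slope' (lt_irrefl x)).mp hg
    filter_upwards [hslope.eventually_lt_const ((hbound hnonneg).trans_lt hr),
      self_mem_nhdsWithin] with z hz hxz
    exact (slope_posPart_le hxz).trans_lt (posPart_lt.mpr ⟨hz, hc.trans_lt hr⟩)

theorem frequently_slope_sup'_lt {ι : Type*} {s : Finset ι} (hs : s.Nonempty)
    {g : ι → ℝ → ℝ} {x r : ℝ} (hg : ∀ i ∈ s, ContinuousWithinAt (g i) (Ioi x) x)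
    (hslope : ∀ i ∈ s, s.sup' hs (fun j => g j x) = g i x →
      ∀ᶠ z in 𝓝[>] x, slope (g i) x z < r) :
    ∃ᶠ z in 𝓝[>] x, slope (fun t => s.sup' hs fun j => g j t) x z < r := by
  set F := fun t => s.sup' hs fun j => g j t
  have hattained : ∃ᶠ z in 𝓝[>] x, ∃ i ∈ s, F z = g i z :=
    Eventually.frequently (Eventually.of_forall fun z =>
      (s.exists_mem_eq_sup' hs fun j => g j z).imp fun i ⟨hi, h⟩ => ⟨hi, h⟩)
  obtain ⟨i, hi, hfreq⟩ := frequently_exists_finset s |>.mp hattained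
  have hFx : F x = g i x := tendsto_nhds_unique_of_frequently_eq
    (ContinuousWithinAt.finset_sup'_apply hs hg) (hg i hi) hfreq
  refine (hfreq.and_eventually (hslope i hi hFx)).mono fun z ⟨hz, hlt⟩ => ?_
  simpa only [slope_def_field, hz, hFx] using hlt

namespace Matrix

variable {ι : Type*}

def IsMetzler {α : Type*} [Zero α] [LE α] (A : Matrix ι ι α) : Prop :=
  ∀ i j, i ≠ j → 0 ≤ A i j

variable [Fintype ι]

theorem IsMetzler.mulVec_le {A : Matrix ι ι ℝ} (hA : A.IsMetzler) {v : ι → ℝ} {i : ι}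
    (hv : ∀ j, v j ≤ v i) : (A *ᵥ v) i ≤ (∑ j, A i j) * v i := by
  rw [mulVec, dotProduct, Finset.sum_mul]
  refine Finset.sum_le_sum fun j _ => ?_
  rcases eq_or_ne j i with rfl | hji
  · exact le_rfl
  · exact mul_le_mul_of_nonneg_left (hv j) (hA i j hji.symm)

theorem IsMetzler.nonpos_of_hasDerivWithinAt_le_mulVec {A : Matrix ι ι ℝ} (hA : A.IsMetzler)
    {u u' : ι → ℝ → ℝ} {a b : ℝ} (hu : ∀ i, ContinuousOn (u i) (Icc a b))
    (hu' : ∀ i, ∀ t ∈ Ico a b, HasDerivWithinAt (u i) (u' i t) (Ioi t) t)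
    (hineq : ∀ i, ∀ t ∈ Ico a b, u' i t ≤ (A *ᵥ fun j => u j t) i)
    (ha : ∀ i, u i a ≤ 0) :
    ∀ i, ∀ t ∈ Icc a b, u i t ≤ 0 := by
  intro i t ht
  have hne : (univ : Finset ι).Nonempty := ⟨i, mem_univ i⟩
  set F : ℝ → ℝ := fun s => univ.sup' hne fun j => (u j s)⁺
  set K : ℝ := ∑ k, |∑ j, A k j|
  have hK : 0 ≤ K := sum_nonneg fun k _ => abs_nonneg _
  have hle_F : ∀ j s, (u j s)⁺ ≤ F s := fun j s => le_sup' (fun j => (u j s)⁺) (mem_univ j)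
  have hF_nonneg : ∀ s, 0 ≤ F s := fun s => (posPart_nonneg _).trans (hle_F i s)
  have hF : ContinuousOn F (Icc a b) := fun s hs =>
    ContinuousWithinAt.finset_sup'_apply hne fun j _ => (hu j s hs).sup continuousWithinAt_const
  have hderiv_le : ∀ x ∈ Ico a b, ∀ j, F x = (u j x)⁺ → 0 ≤ u j x → u' j x ≤ K * F x := by
    intro x hx j hj hj0
    rw [posPart_eq_self.mpr hj0] at hj
    calc u' j x ≤ (A *ᵥ fun k => u k x) j := hineq j x hx
      _ ≤ (∑ k, A j k) * u j x := hA.mulVec_le fun k => hj ▸ (le_posPart _).trans (hle_F k x)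
      _ ≤ K * F x := by
          rw [← hj]
          exact mul_le_mul_of_nonneg_right ((le_abs_self _).trans
            (single_le_sum (fun k _ => abs_nonneg (∑ j, A k j)) (mem_univ j))) (hF_nonneg x)
  have hslope : ∀ x ∈ Ico a b, ∀ r, K * F x < r →
      ∃ᶠ z in 𝓝[>] x, (z - x)⁻¹ * (F z - F x) < r := fun x hx r hr =>
    frequently_slope_sup'_lt hne
      (fun j _ => (hu' j x hx).continuousWithinAt.sup continuousWithinAt_const)
      fun j _ hj => eventually_slope_posPart_lt (hu' j x hx)
        (mul_nonneg hK (hF_nonneg x)) (hderiv_le x hx j hj) hr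
  have hFa : F a ≤ 0 := sup'_le hne _ fun j _ => posPart_nonpos.mpr (ha j)
  have hFt := le_gronwallBound_of_liminf_deriv_right_le hF hslope hFa
    (fun x _ => (add_zero _).ge) t ht
  rw [gronwallBound_ε0_δ0] at hFt
  exact (le_posPart _).trans ((hle_F i t).trans hFt)

end Matrix

theorem maximum_principle_linear_ODE_general
    (n : ℕ) (T : ℝ)
    (u u' : Fin n → ℝ → ℝ) (A : Matrix (Fin n) (Fin n) ℝ)
    (hderiv : ∀ i : Fin n, ∀ t ∈ Set.Ico (0 : ℝ) T,
      HasDerivWithinAt (u i) (u' i t) (Set.Ico 0 T) t)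
    (hA : ∀ i j : Fin n, i ≠ j → 0 ≤ A i j)
    (hineq : ∀ i : Fin n, ∀ t ∈ Set.Ico (0 : ℝ) T,
      u' i t ≤ ∑ j : Fin n, A i j * u j t)
    (h0 : ∀ i : Fin n, u i 0 ≤ 0) :
    ∀ i : Fin n, ∀ t ∈ Set.Ico (0 : ℝ) T, u i t ≤ 0 := by
  intro i t ht
  have hsub : Icc 0 t ⊆ Ico 0 T := Icc_subset_Ico_right ht.2
  have hderiv_right : ∀ j, ∀ s ∈ Ico 0 t, HasDerivWithinAt (u j) (u' j s) (Ioi s) s :=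
    fun j s hs => (hderiv j s (hsub (Ico_subset_Icc_self hs))).mono_of_mem_nhdsWithin
      (Ico_mem_nhdsGT_of_mem ⟨hs.1, hs.2.trans ht.2⟩)
  exact Matrix.IsMetzler.nonpos_of_hasDerivWithinAt_le_mulVec hA
    (fun j s hs => (hderiv j s (hsub hs)).continuousWithinAt.mono hsub) hderiv_right
    (fun j s hs => hineq j s (hsub (Ico_subset_Icc_self hs))) h0 i t ⟨ht.1, le_rfl⟩

theorem maximum_principle_linear_ODE
    (n : ℕ) (hn : 1 ≤ n) (T : ℝ) (hT : 0 < T)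
    (u u' : Fin n → ℝ → ℝ) (A : Matrix (Fin n) (Fin n) ℝ)
    (hderiv : ∀ i : Fin n, ∀ t ∈ Set.Ico (0 : ℝ) T,
      HasDerivWithinAt (u i) (u' i t) (Set.Ico 0 T) t)
    (hcont : ∀ i : Fin n, ContinuousOn (u' i) (Set.Ico 0 T))
    (hA : ∀ i j : Fin n, i ≠ j → 0 ≤ A i j)
    (hineq : ∀ i : Fin n, ∀ t ∈ Set.Ico (0 : ℝ) T,
      u' i t ≤ ∑ j : Fin n, A i j * u j t)
    (h0 : ∀ i : Fin n, u i 0 ≤ 0) :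
    ∀ i : Fin n, ∀ t ∈ Set.Ico (0 : ℝ) T, u i t ≤ 0 :=
  maximum_principle_linear_ODE_general n T u u' A hderiv hA hineq h0
end

section
/- Existence of supersolutions with comparable moments: Assume the coefficient hypotheses (H1)–(H4). Let 0 < ρ < ρ_s and 0 < ω < z_s be given, and let (g_j)_{j≥1} be a non-negative, non-increasing sequence with g_j → 0 as j → ∞ and g_1 ≤ ρ. Then there exists an (ω,ρ)-supersolution (r_j)_{j≥1} to the associated Becker-Döring equations such that r_j → 0 as j → ∞, g_j ≤ r_j for all j ≥ 1, and moreover: for any 1 ≤ δ < z_s/ω and any positive, eventually non-decreasing sequence (φ_j)_{j≥1} satisfying limsup_{j→∞} φ_j/φ_{j−1} ≤ δ, there exists a constant C > 0, depending only on (φ_j), ρ, ω, δ and the coefficients (a_i), (b_i), such that ∑_{j≥1} φ_j r_j ≤ C (1 + ∑_{j≥1} φ_j g_j). -/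
/-!
STATEMENT 8: Existence of supersolutions with comparable moments.

Sequences are indexed by `ℕ`; the physically relevant entries are those of
index `i ≥ 1` (index `0` is unused), and sums over `j ≥ 1` are written as
`∑' j : ℕ, f (j + 1)`.  Moments and the critical density are handled in
`[0,∞]`.  The condition `limsup_{j→∞} φ_j / φ_{j-1} ≤ δ` is expressed as:
for every `δ' > δ`, eventually `φ_{j+1} / φ_j ≤ δ'`.
-/

open Filter Set
open scoped Topology ENNReal

/-- An `(ω,ρ)`-supersolution of the associated Becker–Döring equations: a
non-negative sequence `(r_j)_{j ≥ 1}` with `r_1 ≥ ρ` and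
`a_{j-1} ω (r_{j-1} - r_j) + b_j (r_{j+1} - r_j) ≤ 0` for all `j ≥ 2`. -/
def IsSupersolution (a b : ℕ → ℝ) (ω ρ : ℝ) (r : ℕ → ℝ) : Prop :=
  (∀ j : ℕ, 1 ≤ j → 0 ≤ r j) ∧ ρ ≤ r 1 ∧
    ∀ j : ℕ, 2 ≤ j →
      a (j - 1) * ω * (r (j - 1) - r j) + b j * (r (j + 1) - r j) ≤ 0

/-!
The supersolution is built from its decrements `d_j = r_j - r_{j+1}`: `d_1 = ρ` and
`d_{j+1} = (ω a_j / b_{j+1}) d_j + (g_{j+1} - g_{j+2})`, and `r_j = ∑_{k ≥ j} d_k`.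
The first term makes `r` a supersolution, the second makes `r` dominate `g`.
By (H4), `ω a_j / b_{j+1} ≤ θ := ω / z_s < 1`, and summing the recursion over tails gives
`r_{j+1} ≤ θ r_j + g_{j+1}`. Multiplying by `φ_{j+1} ≤ δ' φ_j`, where `θ δ' < 1`, yields a
recursion of the same kind for `φ_j r_j`, so its series is controlled by that of `φ_j g_j`.
-/

open Finset

theorem hasSum_sub_succ_nat_add {u : ℕ → ℝ} (hu : Antitone u) (h : Tendsto u atTop (𝓝 0))
    (n : ℕ) : HasSum (fun i => u (i + n) - u (i + n + 1)) (u n) := by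
  have hsum : HasSum (fun i => u i - u (i + 1)) (u 0) := by
    rw [hasSum_iff_tendsto_nat_of_nonneg fun i => sub_nonneg.2 (hu i.le_succ)]
    simp_rw [sum_range_sub']
    simpa using tendsto_const_nhds.sub h
  have := (hasSum_nat_add_iff' n).2 hsum
  rwa [sum_range_sub', sub_sub_cancel] at this

theorem summable_and_tsum_le_of_le_mul_add {x e : ℕ → ℝ} {θ : ℝ} (hθ0 : 0 ≤ θ) (hθ1 : θ < 1)
    (hx : ∀ n, 0 ≤ x n) (he : ∀ n, 0 ≤ e n) (he_sum : Summable e)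
    (hrec : ∀ n, x (n + 1) ≤ θ * x n + e n) :
    Summable x ∧ ∑' n, x n ≤ (x 0 + ∑' n, e n) / (1 - θ) := by
  have hpartial : ∀ m, ∑ n ∈ range m, x n ≤ (x 0 + ∑' n, e n) / (1 - θ) := by
    intro m
    rw [le_div_iff₀ (sub_pos.2 hθ1)]
    cases m with
    | zero => simpa using add_nonneg (hx 0) (tsum_nonneg he)
    | succ m =>
      have hx_mono : ∑ n ∈ range m, x n ≤ ∑ n ∈ range (m + 1), x n :=
        sum_le_sum_of_subset_of_nonneg (range_subset_range.2 m.le_succ) fun n _ _ => hx n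
      have he_le : ∑ n ∈ range m, e n ≤ ∑' n, e n := he_sum.sum_le_tsum _ fun n _ => he n
      have hstep : ∑ n ∈ range (m + 1), x n
          ≤ x 0 + θ * ∑ n ∈ range m, x n + ∑ n ∈ range m, e n := by
        calc ∑ n ∈ range (m + 1), x n = ∑ n ∈ range m, x (n + 1) + x 0 := sum_range_succ' _ _
          _ ≤ ∑ n ∈ range m, (θ * x n + e n) + x 0 := by gcongr with n; exact hrec n
          _ = x 0 + θ * ∑ n ∈ range m, x n + ∑ n ∈ range m, e n := by
            rw [sum_add_distrib, ← mul_sum]; ring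
      nlinarith [mul_le_mul_of_nonneg_left hx_mono hθ0]
  exact ⟨summable_of_sum_range_le hx hpartial, Real.tsum_le_of_sum_range_le hx hpartial⟩

theorem Summable.tsum_nat_add_eq_add {α : Type*} [AddCommGroup α] [TopologicalSpace α]
    [IsTopologicalAddGroup α] [T2Space α] {f : ℕ → α} (hf : Summable f) (n : ℕ) :
    ∑' i, f (i + n) = f n + ∑' i, f (i + (n + 1)) := by
  have h := (hf.sum_add_tsum_nat_add n).trans (hf.sum_add_tsum_nat_add (n + 1)).symm
  rw [sum_range_succ, add_assoc] at h
  exact add_left_cancel h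

namespace BeckerDoring

/-- `decrements ρ c e n` is the decrement `d_{n+1}` of the header. -/
def decrements (ρ : ℝ) (c e : ℕ → ℝ) : ℕ → ℝ
  | 0 => ρ
  | n + 1 => c n * decrements ρ c e n + e (n + 1)

section Decrements

variable {ρ θ : ℝ} {c e : ℕ → ℝ}

theorem decrements_nonneg (hρ : 0 ≤ ρ) (hc : ∀ n, 0 ≤ c n) (he : ∀ n, 0 ≤ e n) :
    ∀ n, 0 ≤ decrements ρ c e n
  | 0 => hρ
  | n + 1 => add_nonneg (mul_nonneg (hc n) (decrements_nonneg hρ hc he n)) (he _)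

theorem decrements_succ_le (hρ : 0 ≤ ρ) (hc : ∀ n, 0 ≤ c n) (he : ∀ n, 0 ≤ e n)
    (hcθ : ∀ n, c n ≤ θ) (n : ℕ) :
    decrements ρ c e (n + 1) ≤ θ * decrements ρ c e n + e (n + 1) :=
  add_le_add_left (mul_le_mul_of_nonneg_right (hcθ n) (decrements_nonneg hρ hc he n)) _

theorem summable_decrements (hρ : 0 ≤ ρ) (hc : ∀ n, 0 ≤ c n) (he : ∀ n, 0 ≤ e n)
    (hcθ : ∀ n, c n ≤ θ) (hθ : θ < 1) (he_sum : Summable e) :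
    Summable (decrements ρ c e) :=
  (summable_and_tsum_le_of_le_mul_add ((hc 0).trans (hcθ 0)) hθ
    (decrements_nonneg hρ hc he) (fun n => he (n + 1)) ((summable_nat_add_iff 1).2 he_sum)
    (decrements_succ_le hρ hc he hcθ)).1

end Decrements

noncomputable def tailSums (D : ℕ → ℝ) (j : ℕ) : ℝ := ∑' i, D (i + (j - 1))

section TailSums

variable {D E : ℕ → ℝ}

theorem tailSums_succ (hD : Summable D) (n : ℕ) :
    tailSums D (n + 1) = D n + tailSums D (n + 2) :=
  hD.tsum_nat_add_eq_add n

theorem tendsto_tailSums (D : ℕ → ℝ) : Tendsto (tailSums D) atTop (𝓝 0) :=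
  (tendsto_sum_nat_add D).comp (tendsto_sub_atTop_nat 1)

theorem tailSums_mono (hDE : ∀ n, D n ≤ E n) (hD : Summable D) (hE : Summable E) (j : ℕ) :
    tailSums D j ≤ tailSums E j :=
  Summable.tsum_le_tsum (fun _ => hDE _) ((summable_nat_add_iff _).2 hD)
    ((summable_nat_add_iff _).2 hE)

theorem tailSums_succ_le {θ : ℝ} (hD : Summable D) (hE : Summable E)
    (h : ∀ n, D (n + 1) ≤ θ * D n + E (n + 1)) (n : ℕ) :
    tailSums D (n + 2) ≤ θ * tailSums D (n + 1) + tailSums E (n + 2) := by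
  have hD_tail := ((summable_nat_add_iff n).2 hD).mul_left θ
  have hE_tail := (summable_nat_add_iff (n + 1)).2 hE
  show ∑' i, D (i + (n + 1)) ≤ θ * ∑' i, D (i + n) + ∑' i, E (i + (n + 1))
  rw [← tsum_mul_left, ← hD_tail.tsum_add hE_tail]
  exact Summable.tsum_le_tsum (fun i => h (i + n)) ((summable_nat_add_iff (n + 1)).2 hD)
    (hD_tail.add hE_tail)

theorem isSupersolution_tailSums {a b : ℕ → ℝ} {ω ρ : ℝ} (hD0 : ∀ n, 0 ≤ D n)
    (hD : Summable D) (hρ : ρ ≤ D 0) (h : ∀ n, ω * a (n + 1) * D n ≤ b (n + 2) * D (n + 1)) :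
    IsSupersolution a b ω ρ (tailSums D) := by
  have hr0 : ∀ j, 0 ≤ tailSums D j := fun j => tsum_nonneg fun i => hD0 _
  refine ⟨fun j _ => hr0 j, ?_, fun j hj => ?_⟩
  · rw [tailSums_succ hD 0]
    linarith [hr0 2]
  · obtain ⟨n, rfl⟩ : ∃ n, j = n + 2 := ⟨j - 2, by omega⟩
    show a (n + 1) * ω * (tailSums D (n + 1) - tailSums D (n + 2))
      + b (n + 2) * (tailSums D (n + 3) - tailSums D (n + 2)) ≤ 0
    rw [tailSums_succ hD n, tailSums_succ hD (n + 1)]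
    linarith [h n]

end TailSums

theorem exists_supersolution_of_le_mul {a b g : ℕ → ℝ} {ω ρ θ : ℝ}
    (ha : ∀ i, 1 ≤ i → 0 ≤ a i) (hbpos : ∀ i, 2 ≤ i → 0 < b i) (hω : 0 ≤ ω)
    (hθ : θ < 1) (hab : ∀ i, 1 ≤ i → ω * a i ≤ θ * b (i + 1))
    (hg0 : ∀ j, 1 ≤ j → 0 ≤ g j) (hgmono : ∀ j, 1 ≤ j → g (j + 1) ≤ g j)
    (hgtend : Tendsto g atTop (𝓝 0)) (hg1 : g 1 ≤ ρ) :
    ∃ r : ℕ → ℝ, IsSupersolution a b ω ρ r ∧ Tendsto r atTop (𝓝 0) ∧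
      (∀ j, 1 ≤ j → g j ≤ r j) ∧ ∀ j, 1 ≤ j → r (j + 1) ≤ θ * r j + g (j + 1) := by
  set u : ℕ → ℝ := fun k => g (k + 1)
  have hu : Antitone u := antitone_nat_of_succ_le fun k => hgmono (k + 1) (by omega)
  set c : ℕ → ℝ := fun n => ω * a (n + 1) / b (n + 2)
  set e : ℕ → ℝ := fun k => u k - u (k + 1)
  set D := decrements ρ c e
  have hρ : 0 ≤ ρ := (hg0 1 le_rfl).trans hg1
  have hc : ∀ n, 0 ≤ c n := fun n =>
    div_nonneg (mul_nonneg hω (ha _ (by omega))) (hbpos _ (by omega)).le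
  have hcθ : ∀ n, c n ≤ θ := fun n => (div_le_iff₀ (hbpos _ (by omega))).2 (hab _ (by omega))
  have he : ∀ n, 0 ≤ e n := fun n => sub_nonneg.2 (hu n.le_succ)
  have he_tail : ∀ n, HasSum (fun i => e (i + n)) (g (n + 1)) :=
    hasSum_sub_succ_nat_add hu ((tendsto_add_atTop_iff_nat 1).2 hgtend)
  have he_sum : Summable e := by simpa using (he_tail 0).summable
  have hD0 : ∀ n, 0 ≤ D n := decrements_nonneg hρ hc he
  have hD : Summable D := summable_decrements hρ hc he hcθ hθ he_sum
  have heD : ∀ n, e n ≤ D n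
    | 0 => show g 1 - g 2 ≤ ρ by linarith [hg0 2 (by omega)]
    | n + 1 => le_add_of_nonneg_left (mul_nonneg (hc n) (hD0 n))
  have hcD : ∀ n, ω * a (n + 1) * D n ≤ b (n + 2) * D (n + 1) := fun n => by
    have hb := hbpos (n + 2) le_add_self
    show _ ≤ b (n + 2) * (ω * a (n + 1) / b (n + 2) * D n + e (n + 1))
    rw [mul_add, ← mul_assoc, mul_div_cancel₀ _ hb.ne']
    linarith [mul_nonneg hb.le (he (n + 1))]
  refine ⟨tailSums D, isSupersolution_tailSums hD0 hD le_rfl hcD, tendsto_tailSums D,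
    fun j hj => ?_, fun j hj => ?_⟩
  · obtain ⟨n, rfl⟩ : ∃ n, j = n + 1 := ⟨j - 1, by omega⟩
    rw [← (he_tail n).tsum_eq]
    exact tailSums_mono heD he_sum hD (n + 1)
  · obtain ⟨n, rfl⟩ : ∃ n, j = n + 1 := ⟨j - 1, by omega⟩
    rw [← (he_tail (n + 1)).tsum_eq]
    exact tailSums_succ_le hD he_sum (decrements_succ_le hρ hc he hcθ) n

theorem Q_pos {a b Q : ℕ → ℝ} (hapos : ∀ i, 1 ≤ i → 0 < a i) (hbpos : ∀ i, 2 ≤ i → 0 < b i)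
    (hQ1 : Q 1 = 1) (hQrec : ∀ i, 1 ≤ i → Q (i + 1) = a i / b (i + 1) * Q i) :
    ∀ i, 1 ≤ i → 0 < Q i := by
  intro i hi
  induction i, hi using Nat.le_induction with
  | base => rw [hQ1]; exact one_pos
  | succ i hi ih =>
    have := hapos i hi
    have := hbpos (i + 1) (by omega)
    rw [hQrec i hi]
    positivity

theorem mul_le_of_antitone_Q_mul_pow {a b Q : ℕ → ℝ} {zs : ℝ}
    (hapos : ∀ i, 1 ≤ i → 0 < a i) (hbpos : ∀ i, 2 ≤ i → 0 < b i)
    (hQ1 : Q 1 = 1) (hQrec : ∀ i, 1 ≤ i → Q (i + 1) = a i / b (i + 1) * Q i) (hzs : 0 < zs)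
    (hH4 : ∀ i, 1 ≤ i → Q (i + 1) * zs ^ (i + 1) ≤ Q i * zs ^ i) :
    ∀ i, 1 ≤ i → zs * a i ≤ b (i + 1) := by
  intro i hi
  have hb := hbpos (i + 1) (by omega)
  have hQzs : 0 < Q i * zs ^ i := mul_pos (Q_pos hapos hbpos hQ1 hQrec i hi) (pow_pos hzs i)
  have h : (a i / b (i + 1) * zs) * (Q i * zs ^ i) ≤ 1 * (Q i * zs ^ i) :=
    calc (a i / b (i + 1) * zs) * (Q i * zs ^ i) = Q (i + 1) * zs ^ (i + 1) := by
          rw [hQrec i hi]; ring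
      _ ≤ 1 * (Q i * zs ^ i) := (hH4 i hi).trans_eq (one_mul _).symm
  have := le_of_mul_le_mul_right h hQzs
  rw [div_mul_eq_mul_div, div_le_one hb] at this
  linarith

theorem summable_and_tsum_weighted_le_of_le_mul_add {r g φ : ℕ → ℝ} {θ δ : ℝ} {N : ℕ}
    (hθ : 0 ≤ θ) (hδ : 0 ≤ δ) (hθδ : θ * δ < 1)
    (hφ : ∀ j, 1 ≤ j → 0 < φ j) (hφδ : ∀ j, N ≤ j → φ (j + 1) ≤ δ * φ j)
    (hr : ∀ j, 1 ≤ j → 0 ≤ r j) (hg : ∀ j, 1 ≤ j → 0 ≤ g j)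
    (hrec : ∀ j, 1 ≤ j → r (j + 1) ≤ θ * r j + g (j + 1))
    (hS : Summable fun j => φ (j + 1) * g (j + 1)) :
    (Summable fun j => φ (j + 1) * r (j + 1)) ∧
      ∃ C, 0 < C ∧ ∑' j, φ (j + 1) * r (j + 1) ≤ C * (1 + ∑' j, φ (j + 1) * g (j + 1)) := by
  set f : ℕ → ℝ := fun j => φ (j + 1) * r (j + 1)
  set h : ℕ → ℝ := fun j => φ (j + 1) * g (j + 1)
  have hf : ∀ j, 0 ≤ f j := fun j => mul_nonneg (hφ _ (by omega)).le (hr _ (by omega))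
  have hh : ∀ j, 0 ≤ h j := fun j => mul_nonneg (hφ _ (by omega)).le (hg _ (by omega))
  have hf_rec : ∀ j, N ≤ j → f (j + 1) ≤ θ * δ * f j + h (j + 1) := by
    intro j hj
    have hφ_succ := mul_le_mul_of_nonneg_right (hφδ (j + 1) (by omega)) (hr (j + 1) (by omega))
    have hr_succ := mul_le_mul_of_nonneg_left (hrec (j + 1) (by omega)) (hφ (j + 2) (by omega)).le
    show φ (j + 2) * r (j + 2) ≤ θ * δ * (φ (j + 1) * r (j + 1)) + φ (j + 2) * g (j + 2)
    nlinarith [mul_le_mul_of_nonneg_left hφ_succ hθ]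
  obtain ⟨hsum_tail, htail_le⟩ := summable_and_tsum_le_of_le_mul_add (x := fun i => f (i + N))
    (e := fun i => h (i + N + 1)) (mul_nonneg hθ hδ) hθδ (fun i => hf _) (fun i => hh _)
    ((summable_nat_add_iff (N + 1)).2 hS)
    (fun i => by rw [Nat.add_right_comm]; exact hf_rec (i + N) le_add_self)
  have hsum : Summable f := (summable_nat_add_iff N).1 hsum_tail
  have hh_tail : ∑' i, h (i + N + 1) ≤ ∑' j, h j := by
    rw [← hS.sum_add_tsum_nat_add (N + 1)]
    exact le_add_of_nonneg_left (sum_nonneg fun j _ => hh j)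
  set K := 1 / (1 - θ * δ)
  have hK : 0 < K := one_div_pos.2 (sub_pos.2 hθδ)
  have hhead : 0 ≤ ∑ j ∈ range N, f j := sum_nonneg fun j _ => hf j
  refine ⟨hsum, ∑ j ∈ range N, f j + (f N + 1) * K, by nlinarith [hf N], ?_⟩
  have htail : ∑' i, f (i + N) ≤ (f N + ∑' j, h j) * K := by
    rw [← div_eq_mul_one_div]
    rw [zero_add] at htail_le
    exact htail_le.trans (div_le_div_of_nonneg_right (by linarith) (sub_pos.2 hθδ).le)
  have hS0 : 0 ≤ ∑' j, h j := tsum_nonneg hh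
  rw [← hsum.sum_add_tsum_nat_add N]
  nlinarith [mul_nonneg hhead hS0, mul_nonneg (mul_nonneg (hf N) hK.le) hS0]

theorem exists_le_mul_of_eventually_div_le {φ : ℕ → ℝ} {δ : ℝ} (hφ : ∀ j, 1 ≤ j → 0 < φ j)
    (h : ∀ᶠ j in atTop, φ (j + 1) / φ j ≤ δ) : ∃ N, ∀ j, N ≤ j → φ (j + 1) ≤ δ * φ j := by
  obtain ⟨N, hN⟩ := eventually_atTop.1 (h.and (eventually_ge_atTop 1))
  exact ⟨N, fun j hj => (div_le_iff₀ (hφ j (hN j hj).2)).1 (hN j hj).1⟩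

end BeckerDoring

open BeckerDoring

theorem exists_supersolution_with_comparable_moments_general
    (a b Q : ℕ → ℝ) (zs ρ ω : ℝ)
    (hapos : ∀ i : ℕ, 1 ≤ i → 0 < a i)
    (hbpos : ∀ i : ℕ, 2 ≤ i → 0 < b i)
    (hQ1 : Q 1 = 1)
    (hQrec : ∀ i : ℕ, 1 ≤ i → Q (i + 1) = a i / b (i + 1) * Q i)
    (hzs : 0 < zs)
    (hH4 : ∀ i : ℕ, 1 ≤ i → Q (i + 1) * zs ^ (i + 1) ≤ Q i * zs ^ i)
    (hω0 : 0 < ω) (hωzs : ω < zs)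
    (g : ℕ → ℝ)
    (hg0 : ∀ j : ℕ, 1 ≤ j → 0 ≤ g j)
    (hgmono : ∀ j : ℕ, 1 ≤ j → g (j + 1) ≤ g j)
    (hgtend : Tendsto g atTop (𝓝 0))
    (hg1 : g 1 ≤ ρ) :
    ∃ r : ℕ → ℝ, IsSupersolution a b ω ρ r ∧
      Tendsto r atTop (𝓝 0) ∧
      (∀ j : ℕ, 1 ≤ j → g j ≤ r j) ∧
      ∀ δ : ℝ, 1 ≤ δ → δ < zs / ω →
        ∀ φ : ℕ → ℝ,
          (∀ j : ℕ, 1 ≤ j → 0 < φ j) →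
          (∃ N : ℕ, ∀ j : ℕ, N ≤ j → φ j ≤ φ (j + 1)) →
          (∀ δ' : ℝ, δ < δ' → ∀ᶠ j : ℕ in atTop, φ (j + 1) / φ j ≤ δ') →
          ∃ C : ℝ, 0 < C ∧
            (∑' j : ℕ, ENNReal.ofReal (φ (j + 1) * r (j + 1)))
              ≤ ENNReal.ofReal C *
                  (1 + ∑' j : ℕ, ENNReal.ofReal (φ (j + 1) * g (j + 1))) := by
  have hab : ∀ i, 1 ≤ i → ω * a i ≤ ω / zs * b (i + 1) := fun i hi => by
    rw [div_mul_eq_mul_div, le_div_iff₀ hzs, mul_assoc, mul_comm (a i)]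
    exact mul_le_mul_of_nonneg_left
      (mul_le_of_antitone_Q_mul_pow hapos hbpos hQ1 hQrec hzs hH4 i hi) hω0.le
  obtain ⟨r, hsuper, hr_tend, hgr, hr_rec⟩ := exists_supersolution_of_le_mul
    (fun i hi => (hapos i hi).le) hbpos hω0.le ((div_lt_one hzs).2 hωzs) hab hg0 hgmono hgtend hg1
  refine ⟨r, hsuper, hr_tend, hgr, fun δ hδ hδω φ hφ _ hφ_ratio => ?_⟩
  obtain ⟨δ', hδδ', hδ'ω⟩ := exists_between hδω
  obtain ⟨N, hN⟩ := exists_le_mul_of_eventually_div_le hφ (hφ_ratio δ' hδδ')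
  by_cases hS : ∑' j, ENNReal.ofReal (φ (j + 1) * g (j + 1)) = ∞
  · exact ⟨1, one_pos, by simp [hS]⟩
  have hφg : ∀ j, 0 ≤ φ (j + 1) * g (j + 1) := fun j =>
    mul_nonneg (hφ _ le_add_self).le (hg0 _ le_add_self)
  have hφr : ∀ j, 0 ≤ φ (j + 1) * r (j + 1) := fun j =>
    mul_nonneg (hφ _ le_add_self).le (hsuper.1 _ le_add_self)
  have hS_sum : Summable fun j => φ (j + 1) * g (j + 1) := by
    simpa [ENNReal.toReal_ofReal (hφg _)] using ENNReal.summable_toReal hS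
  have hθδ' : ω / zs * δ' < 1 := by
    rw [div_mul_eq_mul_div, div_lt_one hzs]
    linarith [(lt_div_iff₀ hω0).1 hδ'ω]
  obtain ⟨hsum, C, hC, hle⟩ := summable_and_tsum_weighted_le_of_le_mul_add (div_pos hω0 hzs).le
    (by linarith) hθδ' hφ hN hsuper.1 hg0 hr_rec hS_sum
  refine ⟨C, hC, ?_⟩
  rw [← ENNReal.ofReal_tsum_of_nonneg hφr hsum, ← ENNReal.ofReal_tsum_of_nonneg hφg hS_sum,
    ← ENNReal.ofReal_one, ← ENNReal.ofReal_add zero_le_one (tsum_nonneg hφg),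
    ← ENNReal.ofReal_mul hC.le]
  exact ENNReal.ofReal_le_ofReal hle

/-- **Existence of supersolutions with comparable moments.**  Assume
(H1)–(H4), `0 < ρ < ρ_s`, `0 < ω < z_s`, and let `(g_j)_{j ≥ 1}` be a
non-negative non-increasing sequence tending to `0` with `g_1 ≤ ρ`.  Then
there exists an `(ω,ρ)`-supersolution `(r_j)_{j ≥ 1}` tending to `0` with
`g_j ≤ r_j` for all `j ≥ 1`, and such that for any `1 ≤ δ < z_s/ω` and any
positive, eventually non-decreasing sequence `(φ_j)_{j ≥ 1}` with
`limsup_{j→∞} φ_j/φ_{j-1} ≤ δ` there is a constant `C > 0` with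
`∑_{j ≥ 1} φ_j r_j ≤ C (1 + ∑_{j ≥ 1} φ_j g_j)`. -/
theorem exists_supersolution_with_comparable_moments
    (a b Q : ℕ → ℝ) (γ zs ρ ω : ℝ)
    (hapos : ∀ i : ℕ, 1 ≤ i → 0 < a i)
    (hbpos : ∀ i : ℕ, 2 ≤ i → 0 < b i)
    (hH1 : BDH1 a γ)
    (hH2 : ∃ bbar : ℝ, 0 < bbar ∧ ∀ i : ℕ, 1 ≤ i → b i ≤ bbar * a i)
    (hQ1 : Q 1 = 1)
    (hQrec : ∀ i : ℕ, 1 ≤ i → Q (i + 1) = a i / b (i + 1) * Q i)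
    (hzs : 0 < zs)
    (hH3 : Tendsto (fun i : ℕ => Q (i + 1) / Q i) atTop (𝓝 (1 / zs)))
    (hH4 : ∀ i : ℕ, 1 ≤ i → Q (i + 1) * zs ^ (i + 1) ≤ Q i * zs ^ i)
    (hρpos : 0 < ρ)
    (hsub : ENNReal.ofReal ρ
      < ∑' i : ℕ, ENNReal.ofReal (((i : ℝ) + 1) * Q (i + 1) * zs ^ (i + 1)))
    (hω0 : 0 < ω) (hωzs : ω < zs)
    (g : ℕ → ℝ)
    (hg0 : ∀ j : ℕ, 1 ≤ j → 0 ≤ g j)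
    (hgmono : ∀ j : ℕ, 1 ≤ j → g (j + 1) ≤ g j)
    (hgtend : Tendsto g atTop (𝓝 0))
    (hg1 : g 1 ≤ ρ) :
    ∃ r : ℕ → ℝ, IsSupersolution a b ω ρ r ∧
      Tendsto r atTop (𝓝 0) ∧
      (∀ j : ℕ, 1 ≤ j → g j ≤ r j) ∧
      ∀ δ : ℝ, 1 ≤ δ → δ < zs / ω →
        ∀ φ : ℕ → ℝ,
          (∀ j : ℕ, 1 ≤ j → 0 < φ j) →
          (∃ N : ℕ, ∀ j : ℕ, N ≤ j → φ j ≤ φ (j + 1)) →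
          (∀ δ' : ℝ, δ < δ' → ∀ᶠ j : ℕ in atTop, φ (j + 1) / φ j ≤ δ') →
          ∃ C : ℝ, 0 < C ∧
            (∑' j : ℕ, ENNReal.ofReal (φ (j + 1) * r (j + 1)))
              ≤ ENNReal.ofReal C *
                  (1 + ∑' j : ℕ, ENNReal.ofReal (φ (j + 1) * g (j + 1))) :=
  exists_supersolution_with_comparable_moments_general a b Q zs ρ ω hapos hbpos hQ1 hQrec hzs hH4
    hω0 hωzs g hg0 hgmono hgtend hg1
end

section
/- Upper bound for the stretched exponential moment by the weighted tail density: Let α > 0 and 0 < μ < 1. Then for every non-negative summable sequence (c_i)_{i≥1} with tail density (G_j)_{j≥1}, one has ∑_{i≥1} exp(α i^μ) c_i ≤ max(1, 2^{1−μ} α μ) · ∑_{j≥1} j^{μ−1} exp(α j^μ) G_j (the inequality being understood in [0,∞]). -/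
/-!
With `W t = exp (α t ^ μ)`, the increment `W (a + 1) - W a` is at most
`α ((a + 1) ^ μ - a ^ μ) W (a + 1)` (convexity of `exp`), and concavity of `t ^ μ` bounds
`(a + 1) ^ μ - a ^ μ` by `μ a ^ (μ - 1) ≤ 2 ^ (1 - μ) μ (a + 1) ^ (μ - 1)`. Telescoping gives
`W n ≤ M ∑_{j ≤ n} j ^ (μ - 1) W j` with `M = max 1 (2 ^ (1 - μ) α μ)`, the `1` covering
`n = 1`. Multiplying by `c_n`, summing over `n` and exchanging the two sums in `[0, ∞]` turns
the inner sums over `j ≤ n` into the tails `G_j`.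
-/

open Real Finset
open scoped ENNReal

theorem Real.exp_sub_exp_le_sub_mul_exp (x y : ℝ) : exp x - exp y ≤ (x - y) * exp x := by
  have h := mul_le_mul_of_nonneg_left (add_one_le_exp (y - x)) (exp_pos x).le
  rw [← exp_add, add_sub_cancel] at h
  linarith

theorem Real.add_rpow_sub_rpow_le {a h μ : ℝ} (ha : 0 < a) (hh : -a ≤ h) (hμ0 : 0 ≤ μ)
    (hμ1 : μ ≤ 1) : (a + h) ^ μ - a ^ μ ≤ μ * a ^ (μ - 1) * h := by
  have hs : -1 ≤ h / a := by rwa [le_div_iff₀ ha, neg_one_mul]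
  have hconc := rpow_one_add_le_one_add_mul_self hs hμ0 hμ1
  calc (a + h) ^ μ - a ^ μ = a ^ μ * (1 + h / a) ^ μ - a ^ μ := by
        rw [← mul_rpow ha.le (by linarith), mul_add, mul_one, mul_div_cancel₀ _ ha.ne']
    _ ≤ a ^ μ * (1 + μ * (h / a)) - a ^ μ := by gcongr
    _ = μ * a ^ (μ - 1) * h := by
        rw [rpow_sub_one ha.ne']
        field_simp
        ring

theorem Real.rpow_sub_one_le_two_rpow_mul {a b μ : ℝ} (ha : 0 < a) (hb : b ≤ 2 * a)
    (hb0 : 0 < b) (hμ : μ ≤ 1) : a ^ (μ - 1) ≤ 2 ^ (1 - μ) * b ^ (μ - 1) := by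
  calc a ^ (μ - 1) = 2 ^ (1 - μ) * (2 * a) ^ (μ - 1) := by
        rw [mul_rpow zero_le_two ha.le, ← mul_assoc, ← rpow_add zero_lt_two]
        norm_num
    _ ≤ 2 ^ (1 - μ) * b ^ (μ - 1) := by
        gcongr ?_ * ?_
        exact rpow_le_rpow_of_nonpos hb0 hb (by linarith)

theorem Real.exp_mul_rpow_add_one_sub_le {α μ a : ℝ} (hα : 0 ≤ α) (hμ0 : 0 ≤ μ) (hμ1 : μ ≤ 1)
    (ha : 1 ≤ a) :
    exp (α * (a + 1) ^ μ) - exp (α * a ^ μ) ≤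
      2 ^ (1 - μ) * α * μ * ((a + 1) ^ (μ - 1) * exp (α * (a + 1) ^ μ)) := by
  have hincr := add_rpow_sub_rpow_le (a := a) (h := 1) (by linarith) (by linarith) hμ0 hμ1
  have hratio := rpow_sub_one_le_two_rpow_mul (a := a) (b := a + 1) (by linarith) (by linarith)
    (by linarith) hμ1
  calc exp (α * (a + 1) ^ μ) - exp (α * a ^ μ)
      ≤ α * ((a + 1) ^ μ - a ^ μ) * exp (α * (a + 1) ^ μ) := by
        rw [mul_sub]; exact exp_sub_exp_le_sub_mul_exp _ _
    _ ≤ α * (μ * (2 ^ (1 - μ) * (a + 1) ^ (μ - 1))) * exp (α * (a + 1) ^ μ) := by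
        rw [mul_one] at hincr
        gcongr
        exact hincr.trans (mul_le_mul_of_nonneg_left hratio hμ0)
    _ = _ := by ring

theorem le_sum_range_of_sub_le {w g : ℕ → ℝ} (h0 : w 0 ≤ g 0)
    (hsucc : ∀ n, w (n + 1) - w n ≤ g (n + 1)) (n : ℕ) :
    w n ≤ ∑ j ∈ range (n + 1), g j := by
  induction n with
  | zero => simpa using h0
  | succ n ih => rw [sum_range_succ]; linarith [hsucc n]

theorem Real.exp_mul_rpow_le_max_mul_sum {α μ : ℝ} (hα : 0 ≤ α) (hμ0 : 0 ≤ μ) (hμ1 : μ ≤ 1)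
    (n : ℕ) :
    exp (α * ((n : ℝ) + 1) ^ μ) ≤ max 1 (2 ^ (1 - μ) * α * μ) *
      ∑ j ∈ range (n + 1), ((j : ℝ) + 1) ^ (μ - 1) * exp (α * ((j : ℝ) + 1) ^ μ) := by
  rw [mul_sum]
  refine le_sum_range_of_sub_le (w := fun n : ℕ => exp (α * ((n : ℝ) + 1) ^ μ)) ?_ (fun n => ?_) n
  · simpa using le_mul_of_one_le_left (exp_pos α).le (le_max_left _ _)
  · push_cast
    refine (exp_mul_rpow_add_one_sub_le hα hμ0 hμ1 (by simp)).trans ?_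
    gcongr
    exact le_max_right _ _

theorem ENNReal.tsum_mul_sum_range_eq_tsum_mul_tsum_add (f c : ℕ → ℝ≥0∞) :
    ∑' n, (∑ j ∈ range (n + 1), f j) * c n = ∑' j, f j * ∑' k, c (j + k) := by
  calc ∑' n, (∑ j ∈ range (n + 1), f j) * c n
      = ∑' n, ∑ p ∈ antidiagonal n, f p.1 * c (p.1 + p.2) := by
        refine tsum_congr fun n => ?_
        rw [Nat.sum_antidiagonal_eq_sum_range_succ_mk, sum_mul]
        refine sum_congr rfl fun j hj => ?_
        rw [Nat.add_sub_cancel' (Nat.le_of_lt_succ (mem_range.1 hj))]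
    _ = ∑' p : ℕ × ℕ, f p.1 * c (p.1 + p.2) := by
        rw [← HasAntidiagonal.sigmaAntidiagonalEquivProd.tsum_eq, ENNReal.tsum_sigma']
        exact tsum_congr fun n => by rw [tsum_fintype, ← sum_coe_sort]; rfl
    _ = ∑' j, f j * ∑' k, c (j + k) := by
        rw [ENNReal.tsum_prod (f := fun j k => f j * c (j + k))]
        simp_rw [ENNReal.tsum_mul_left]

theorem stretched_exponential_moment_upper_bound
    (α μ : ℝ) (hα : 0 < α) (hμ0 : 0 < μ) (hμ1 : μ < 1)
    (c : ℕ → ℝ)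
    (hc : ∀ i : ℕ, 0 ≤ c (i + 1))
    (hsumm : Summable fun i : ℕ => c (i + 1)) :
    (∑' i : ℕ, ENNReal.ofReal (Real.exp (α * ((i : ℝ) + 1) ^ μ) * c (i + 1)))
      ≤ ENNReal.ofReal (max 1 ((2 : ℝ) ^ (1 - μ) * α * μ)) *
          ∑' j : ℕ, ENNReal.ofReal
            (((j : ℝ) + 1) ^ (μ - 1) * Real.exp (α * ((j : ℝ) + 1) ^ μ) *
              ∑' i : ℕ, c (j + 1 + i)) := by
  set M := max 1 ((2 : ℝ) ^ (1 - μ) * α * μ)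
  set w : ℕ → ℝ := fun j => ((j : ℝ) + 1) ^ (μ - 1) * Real.exp (α * ((j : ℝ) + 1) ^ μ)
  have hw : ∀ j, 0 ≤ w j := fun j => by positivity
  have hc' : ∀ j k, 0 ≤ c (j + 1 + k) := fun j k => by rw [add_right_comm]; exact hc _
  have hsumm' : ∀ j, Summable fun k => c (j + 1 + k) := fun j =>
    ((summable_nat_add_iff j).2 hsumm).congr fun k => congrArg c (by omega)
  calc (∑' i : ℕ, ENNReal.ofReal (Real.exp (α * ((i : ℝ) + 1) ^ μ) * c (i + 1)))
      ≤ ∑' i : ℕ, ENNReal.ofReal M *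
          ((∑ j ∈ range (i + 1), ENNReal.ofReal (w j)) * ENNReal.ofReal (c (i + 1))) := by
        refine ENNReal.tsum_le_tsum fun i => ?_
        rw [← ENNReal.ofReal_sum_of_nonneg fun j _ => hw j, ← ENNReal.ofReal_mul (by positivity),
          ← ENNReal.ofReal_mul (by positivity), ← mul_assoc]
        exact ENNReal.ofReal_le_ofReal (mul_le_mul_of_nonneg_right
          (exp_mul_rpow_le_max_mul_sum hα.le hμ0.le hμ1.le i) (hc i))
    _ = ENNReal.ofReal M *
          ∑' j, ENNReal.ofReal (w j) * ∑' k, ENNReal.ofReal (c (j + k + 1)) := by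
        rw [ENNReal.tsum_mul_left, ENNReal.tsum_mul_sum_range_eq_tsum_mul_tsum_add]
    _ = _ := by
        congr 1
        refine tsum_congr fun j => ?_
        simp_rw [add_right_comm j _ 1]
        rw [← ENNReal.ofReal_tsum_of_nonneg (hc' j) (hsumm' j), ← ENNReal.ofReal_mul (hw j)]
end
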